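/- arXiv:1904.12950 — 2 statements merged into one kernel-verified Lean document; each statement's English description precedes it below -/
import Mathlib

section
/- Let F : ℂ × ℝ → ℝ be continuous, let 𝔄 = {(z,w) ∈ ℂ² : Im w > F(z, Re w)}, and suppose there exist an entire function ℋ : ℂ → ℂ and a continuous function Θ : ℝ → ℝ such that the topological boundary ∂𝔄 equals ⋃_{t∈ℝ} {(z, ℋ(z) + t + i·Θ(t)) : z ∈ ℂ}. Then for every t ∈ ℝ and every s > Θ(t) the graph {(z, ℋ(z) + t + i·s) : z ∈ ℂ} is contained in 𝔄; consequently 𝔄 is not Brody hyperbolic and the core 𝔠(𝔄) is nonempty. -/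
open Complex Set MeasureTheory
open scoped ENNReal NNReal Topology

noncomputable section

/-- `φ` satisfies the circle sub-mean-value (plurisubharmonicity) inequality on `Ω`:
for every `p ∈ Ω`, direction `v` and radius `r > 0` such that the closed disc
`{p + t • v : |t| ≤ r}` lies in `Ω`, the value `φ p` is at most the circle average. -/
def IsPSH {E : Type*} [NormedAddCommGroup E] [NormedSpace ℂ E] (Ω : Set E) (φ : E → ℝ) : Prop :=
  ∀ p ∈ Ω, ∀ (v : E) (r : ℝ), 0 < r →
    (∀ t : ℂ, ‖t‖ ≤ r → p + t • v ∈ Ω) →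
    φ p ≤ (1 / (2 * Real.pi)) *
      ∫ θ in (0:ℝ)..(2 * Real.pi),
        φ (p + (((r : ℂ)) * Complex.exp ((θ : ℂ) * Complex.I)) • v)

/-- A nonempty proper open subset of `ℂ²` is pseudoconvex if `-log dist(·, Ωᶜ)` is
plurisubharmonic on it. -/
def Pseudoconvex (Ω : Set (ℂ × ℂ)) : Prop :=
  Ω.Nonempty ∧ IsOpen Ω ∧ Ω ≠ univ ∧
    IsPSH Ω (fun p => -Real.log (Metric.infDist p Ωᶜ))

/-- The model domain `𝔄 = {(z,w) : Im w > F (z, Re w)}` attached to `F : ℂ × ℝ → ℝ`. -/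
def modelDomain (F : ℂ × ℝ → ℝ) : Set (ℂ × ℂ) :=
  {p : ℂ × ℂ | F (p.1, p.2.re) < p.2.im}

/-- Euclidean squared norm on `ℂ²`. -/
def eSq (p : ℂ × ℂ) : ℝ := ‖p.1‖ ^ 2 + ‖p.2‖ ^ 2

/-- `φ` is strictly plurisubharmonic at `p ∈ Ω`: for some `ε > 0` and open
neighbourhood `U ⊆ Ω` of `p`, the function `z ↦ φ z - ε * ‖z‖²` is psh on `U`. -/
def StrictPSHAt (Ω : Set (ℂ × ℂ)) (φ : ℂ × ℂ → ℝ) (p : ℂ × ℂ) : Prop :=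
  ∃ ε > (0:ℝ), ∃ U : Set (ℂ × ℂ), IsOpen U ∧ p ∈ U ∧ U ⊆ Ω ∧
    IsPSH U (fun z => φ z - ε * eSq z)

/-- `Ω ⊆ ℂ²` is Brody hyperbolic: every holomorphic `f : ℂ → ℂ²` with image in `Ω`
is constant. -/
def BrodyHyperbolic (Ω : Set (ℂ × ℂ)) : Prop :=
  ∀ f : ℂ → ℂ × ℂ, Differentiable ℂ f → (∀ z, f z ∈ Ω) → ∀ a b, f a = f b

/-- The core of `Ω`: points where every smooth bounded-above plurisubharmonic function
on `Ω` fails to be strictly plurisubharmonic. -/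
def core (Ω : Set (ℂ × ℂ)) : Set (ℂ × ℂ) :=
  {p | p ∈ Ω ∧ ∀ φ : ℂ × ℂ → ℝ, ContDiffOn ℝ (⊤ : ℕ∞) φ Ω → IsPSH Ω φ →
    (∃ C, ∀ q ∈ Ω, φ q ≤ C) → ¬ StrictPSHAt Ω φ p}

/-- The polynomial hull of `K ⊆ ℂ²`. -/
def polyHull (K : Set (ℂ × ℂ)) : Set (ℂ × ℂ) :=
  {p | ∀ P : MvPolynomial (Fin 2) ℂ,
    ‖MvPolynomial.eval ![p.1, p.2] P‖ ≤
      sSup ((fun q : ℂ × ℂ => ‖MvPolynomial.eval ![q.1, q.2] P‖) '' K)}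

/-- The graph `Γ(g) = {(z, u + i g(z,u)) : (z,u) ∈ E} ⊆ ℂ²` of `g` over `E ⊆ ℂ × ℝ`. -/
def graphG (E : Set (ℂ × ℝ)) (g : ℂ × ℝ → ℝ) : Set (ℂ × ℂ) :=
  {p : ℂ × ℂ | ∃ q ∈ E, p = (q.1, (q.2 : ℂ) + (g q : ℂ) * Complex.I)}

/-- The open ball `B_R = {(z,u) : |z|² + u² < R²} ⊆ ℂ × ℝ`. -/
def ballCR (R : ℝ) : Set (ℂ × ℝ) := {q | ‖q.1‖ ^ 2 + q.2 ^ 2 < R ^ 2}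

/-- The closed ball `cl(B_R) ⊆ ℂ × ℝ`. -/
def closedBallCR (R : ℝ) : Set (ℂ × ℝ) := {q | ‖q.1‖ ^ 2 + q.2 ^ 2 ≤ R ^ 2}

/-- The sphere `∂B_R ⊆ ℂ × ℝ`. -/
def sphereCR (R : ℝ) : Set (ℂ × ℝ) := {q | ‖q.1‖ ^ 2 + q.2 ^ 2 = R ^ 2}

/-- The union `⋃ t ∈ ℝ` of the graphs of `w = H z + t + i Θ t`. -/
def foliation (H : ℂ → ℂ) (Θ : ℝ → ℝ) : Set (ℂ × ℂ) :=
  ⋃ t : ℝ, {p : ℂ × ℂ | ∃ z : ℂ, p = (z, H z + (t : ℂ) + (Θ t : ℂ) * Complex.I)}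

/-- There is a bounded smooth strictly plurisubharmonic function on `Ω`. -/
def ExistsBoundedSmoothStrictPSH (Ω : Set (ℂ × ℂ)) : Prop :=
  ∃ φ : ℂ × ℂ → ℝ, ContDiffOn ℝ (⊤ : ℕ∞) φ Ω ∧ (∃ C, ∀ p ∈ Ω, |φ p| ≤ C) ∧
    ∀ p ∈ Ω, StrictPSHAt Ω φ p


open scoped ContDiff Real

section Aux

lemma isOpen_modelDomain (F : ℂ × ℝ → ℝ) (hF : Continuous F) : IsOpen (modelDomain F) := by
  apply isOpen_lt
  · exact hF.comp (continuous_fst.prodMk (Complex.continuous_re.comp (continuous_snd)))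
  · exact Complex.continuous_im.comp continuous_snd

lemma graph_mem_frontier (F : ℂ × ℝ → ℝ) (hF : Continuous F) (z : ℂ) (u : ℝ) :
    ((z, (u : ℂ) + (F (z, u) : ℂ) * Complex.I) : ℂ × ℂ) ∈ frontier (modelDomain F) := by
  constructor
  · -- in closure
    have ht : Filter.Tendsto (fun n : ℕ =>
        ((z, (u : ℂ) + ((F (z, u) + 1/(n+1) : ℝ) : ℂ) * Complex.I) : ℂ × ℂ)) Filter.atTop
        (nhds ((z, (u : ℂ) + (F (z, u) : ℂ) * Complex.I) : ℂ × ℂ)) := by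
      apply Filter.Tendsto.prodMk_nhds tendsto_const_nhds
      have h1 : Filter.Tendsto (fun n : ℕ => (F (z, u) + 1/(n+1) : ℝ)) Filter.atTop
          (nhds (F (z, u))) := by
        have := tendsto_one_div_add_atTop_nhds_zero_nat (𝕜 := ℝ)
        simpa using tendsto_const_nhds.add this
      have h2 := ((Complex.continuous_ofReal.tendsto _).comp h1).mul_const Complex.I
      simpa using tendsto_const_nhds.add h2
    apply mem_closure_of_tendsto ht
    filter_upwards with n
    set c : ℝ := F (z,u) + 1/(n+1) with hc
    show F (z, ((u:ℂ) + (c:ℂ) * Complex.I).re) < ((u:ℂ) + (c:ℂ) * Complex.I).im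
    have hre : ((u:ℂ) + (c:ℂ) * Complex.I).re = u := by simp
    have him : ((u:ℂ) + (c:ℂ) * Complex.I).im = c := by simp
    rw [hre, him, hc]
    have : (0:ℝ) < 1/(n+1) := by positivity
    linarith
  · -- not in interior
    rw [IsOpen.interior_eq (isOpen_modelDomain F hF)]
    show ¬ (F (z, ((u:ℂ) + ((F (z,u):ℝ):ℂ) * Complex.I).re) <
        ((u:ℂ) + ((F (z,u):ℝ):ℂ) * Complex.I).im)
    have hre : ((u:ℂ) + ((F (z,u):ℝ):ℂ) * Complex.I).re = u := by simp
    have him : ((u:ℂ) + ((F (z,u):ℝ):ℂ) * Complex.I).im = F (z,u) := by simp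
    rw [hre, him]
    simp

lemma graph_above_mem (F : ℂ × ℝ → ℝ) (hF : Continuous F)
    (H : ℂ → ℂ) (Θ : ℝ → ℝ)
    (hb : frontier (modelDomain F) = foliation H Θ) :
    ∀ t s : ℝ, Θ t < s → ∀ z : ℂ,
      ((z, H z + (t : ℂ) + (s : ℂ) * Complex.I) : ℂ × ℂ) ∈ modelDomain F := by
  intro t s hts z
  have hfr := graph_mem_frontier F hF z ((H z).re + t)
  rw [hb, foliation, mem_iUnion] at hfr
  obtain ⟨t', z', hz'⟩ := hfr
  have hz : z' = z := (congrArg Prod.fst hz').symm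
  rw [hz] at hz'
  have h2 : (((H z).re + t : ℝ) : ℂ) + (F (z, (H z).re + t) : ℂ) * Complex.I
      = H z + (t' : ℂ) + (Θ t' : ℂ) * Complex.I := congrArg Prod.snd hz'
  have hre := congrArg Complex.re h2
  have him := congrArg Complex.im h2
  simp only [Complex.add_re, Complex.add_im, Complex.ofReal_re, Complex.ofReal_im,
    Complex.mul_re, Complex.mul_im, Complex.I_re, Complex.I_im, mul_zero, mul_one,
    zero_mul, sub_zero, zero_add, add_zero, zero_sub, neg_zero] at hre him
  -- hre : (H z).re + t = (H z).re + t'    him : F (...) = (H z).im + Θ t'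
  have ht' : t' = t := by linarith
  rw [ht'] at him
  show F (z, (H z + (t:ℂ) + (s:ℂ)*Complex.I).re) < (H z + (t:ℂ) + (s:ℂ)*Complex.I).im
  have hRe : (H z + (t:ℂ) + (s:ℂ)*Complex.I).re = (H z).re + t := by simp
  have hIm : (H z + (t:ℂ) + (s:ℂ)*Complex.I).im = (H z).im + s := by simp
  rw [hRe, hIm, him]
  linarith

lemma lineMapHasDerivAt (x e : ℂ) (s : ℝ) : HasDerivAt (fun τ : ℝ => x + τ • e) e s := by
  simpa using ((hasDerivAt_id s).smul_const e).const_add x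

lemma lineDeriv1 {u : ℂ → ℝ} {S : Set ℂ} (hS : IsOpen S) (hu : ContDiffOn ℝ ∞ u S)
    {x : ℂ} (e : ℂ) {s : ℝ} (hx : x + s • e ∈ S) :
    HasDerivAt (fun τ : ℝ => u (x + τ • e)) (fderiv ℝ u (x + s • e) e) s := by
  have hd : DifferentiableAt ℝ u (x + s • e) :=
    (hu.differentiableOn (by norm_num)).differentiableAt (hS.mem_nhds hx)
  exact hd.hasFDerivAt.comp_hasDerivAt s (lineMapHasDerivAt x e s)

lemma lineDeriv2' {u : ℂ → ℝ} {S : Set ℂ} (hS : IsOpen S) (hu : ContDiffOn ℝ ∞ u S)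
    {x : ℂ} (e : ℂ) {s : ℝ} (hx : x + s • e ∈ S) :
    HasDerivAt (fun τ : ℝ => fderiv ℝ u (x + τ • e) e)
      (fderiv ℝ (fderiv ℝ u) (x + s • e) e e) s := by
  have hG : ContDiffOn ℝ ∞ (fderiv ℝ u) S := hu.fderiv_of_isOpen hS (by simp)
  have hGd : DifferentiableAt ℝ (fderiv ℝ u) (x + s • e) :=
    (hG.differentiableOn (by norm_num)).differentiableAt (hS.mem_nhds hx)
  have h1 : HasDerivAt (fun τ : ℝ => fderiv ℝ u (x + τ • e))
      (fderiv ℝ (fderiv ℝ u) (x + s • e) e) s := by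
    have := hGd.hasFDerivAt.comp_hasDerivAt s (lineMapHasDerivAt x e s)
    exact this
  have := h1.clm_apply (hasDerivAt_const s e)
  simpa using this

lemma lineDeriv2 {u : ℂ → ℝ} {S : Set ℂ} (hS : IsOpen S) (hu : ContDiffOn ℝ ∞ u S)
    {x : ℂ} (hx : x ∈ S) (e : ℂ) :
    HasDerivAt (fun s : ℝ => fderiv ℝ u (x + s • e) e)
      (fderiv ℝ (fderiv ℝ u) x e e) 0 := by
  have := lineDeriv2' hS hu e (s := 0) (by simpa using hx)
  simpa using this

/-- uniqueness: any eventual derivative-function with a derivative at 0 computes the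
second directional derivative. -/
lemma lapEq {u : ℂ → ℝ} {S : Set ℂ} (hS : IsOpen S) (hu : ContDiffOn ℝ ∞ u S)
    {x : ℂ} (hx : x ∈ S) (e : ℂ) {g : ℝ → ℝ} {L : ℝ}
    (hg : ∀ᶠ s in nhds (0:ℝ), HasDerivAt (fun τ : ℝ => u (x + τ • e)) (g s) s)
    (hL : HasDerivAt g L 0) :
    L = fderiv ℝ (fderiv ℝ u) x e e := by
  have hnb : ∀ᶠ s in nhds (0:ℝ), x + s • e ∈ S := by
    have hc : Continuous (fun s : ℝ => x + s • e) := by fun_prop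
    have : (fun s : ℝ => x + s • e) 0 ∈ S := by simpa using hx
    exact hc.continuousAt.preimage_mem_nhds (hS.mem_nhds this)
  have heq : ∀ᶠ s in nhds (0:ℝ), g s = fderiv ℝ u (x + s • e) e := by
    filter_upwards [hg, hnb] with s hgs hs
    exact hgs.unique (lineDeriv1 hS hu e hs)
  have hL' : HasDerivAt (fun s : ℝ => fderiv ℝ u (x + s • e) e) L 0 := by
    apply hL.congr_of_eventuallyEq
    filter_upwards [heq] with s h using h.symm
  exact hL'.unique (lineDeriv2 hS hu hx e)

/-- 1D second derivative test at a local max. -/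
lemma secondDerivTest {g g' : ℝ → ℝ} {L : ℝ}
    (hg : ∀ᶠ s in nhds (0:ℝ), HasDerivAt g (g' s) s) (hg' : HasDerivAt g' L 0)
    (hmax : IsLocalMax g 0) : L ≤ 0 := by
  by_contra hL
  push_neg at hL
  have h0 : g' 0 = 0 := by
    have h1 : deriv g 0 = 0 := hmax.deriv_eq_zero
    have h2 : HasDerivAt g (g' 0) 0 := hg.self_of_nhds
    rw [← h2.deriv]; exact h1
  -- g' positive on a right neighborhood
  have hslope : Filter.Tendsto (slope g' 0) (nhdsWithin 0 {0}ᶜ) (nhds L) :=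
    hasDerivAt_iff_tendsto_slope.1 hg'
  have hpos : ∀ᶠ s in nhdsWithin (0:ℝ) (Set.Ioi 0), 0 < g' s := by
    have h1 : ∀ᶠ s in nhdsWithin (0:ℝ) (Set.Ioi 0), L/2 < slope g' 0 s := by
      have := hslope.mono_left (nhdsWithin_mono 0 (by
        intro s hs
        exact ne_of_gt hs))
      exact this.eventually_const_lt (by linarith)
    filter_upwards [h1, self_mem_nhdsWithin] with s hs hs'
    have hspos : (0:ℝ) < s := hs'
    have hv : slope g' 0 s = g' s / s := by
      simp [slope_def_field, h0]
    rw [hv] at hs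
    by_contra hnp
    push_neg at hnp
    have : g' s / s ≤ 0 := div_nonpos_of_nonpos_of_nonneg hnp (le_of_lt hspos)
    linarith
  rw [eventually_nhdsWithin_iff] at hpos
  obtain ⟨a, ha, hball⟩ := Metric.eventually_nhds_iff_ball.1 (hpos.and (hg.and hmax))
  -- pick b in (0, a)
  set b := a/2 with hb
  have hb0 : 0 < b := by positivity
  have hba : b < a := by simp [hb]; linarith
  have hmono : StrictMonoOn g (Set.Icc 0 b) := by
    apply strictMonoOn_of_deriv_pos (convex_Icc 0 b)
    · intro s hs
      have hsa : s ∈ Metric.ball (0:ℝ) a := by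
        simp only [Metric.mem_ball, Real.dist_eq, abs_sub_comm, sub_zero]
        rw [_root_.abs_of_nonneg hs.1]
        linarith [hs.2]
      exact ((hball _ hsa).2.1).continuousAt.continuousWithinAt
    · intro s hs
      rw [interior_Icc] at hs
      have hsa : s ∈ Metric.ball (0:ℝ) a := by
        simp only [Metric.mem_ball, Real.dist_eq, sub_zero]
        rw [_root_.abs_of_nonneg (le_of_lt hs.1)]
        linarith [hs.2]
      have h := hball _ hsa
      rw [(h.2.1).deriv]
      exact h.1 hs.1
  have hlt : g 0 < g b := hmono (by constructor <;> [exact le_refl 0; exact le_of_lt hb0])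
    (by constructor <;> [exact le_of_lt hb0; exact le_refl b]) hb0
  have hle : g b ≤ g 0 := by
    have hba' : b ∈ Metric.ball (0:ℝ) a := by
      simp only [Metric.mem_ball, Real.dist_eq, sub_zero, _root_.abs_of_pos hb0]; exact hba
    exact (hball _ hba').2.2
  linarith

/-- second order Taylor estimate along a ray -/
lemma rayTaylor {b : ℂ → ℝ} {S : Set ℂ} (hS : IsOpen S) (hb : ContDiffOn ℝ ∞ b S)
    {η r : ℝ} (hη : 0 ≤ η) (hr : 0 < r) (e : ℂ) (he : ‖e‖ = 1)
    (hball : ∀ x : ℂ, ‖x‖ ≤ r → x ∈ S)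
    (hH : ∀ x : ℂ, ‖x‖ ≤ r →
      ‖fderiv ℝ (fderiv ℝ b) x - fderiv ℝ (fderiv ℝ b) 0‖ ≤ η) :
    |b ((r:ℝ) • e) - b 0 - r * (fderiv ℝ b 0 e)
      - r^2 * ((fderiv ℝ (fderiv ℝ b) 0 e e)/2)| ≤ η * r^2 := by
  set G := fderiv ℝ b with hG
  set Hs := fderiv ℝ G with hHs
  set g1e := G 0 e with hg1e
  set A := Hs 0 e e with hA
  have hmem : ∀ s : ℝ, |s| ≤ r → (0:ℂ) + s • e ∈ S := by
    intro s hs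
    apply hball
    rw [zero_add]
    have : ‖(s • e)‖ = |s| * ‖e‖ := by
      rw [Complex.real_smul, norm_mul, Complex.norm_real, Real.norm_eq_abs]
    rw [this, he, mul_one]; exact hs
  set w : ℝ → ℝ := fun s => b ((0:ℂ) + s • e) - b 0 - s * g1e - s^2 * (A/2) with hw
  set v : ℝ → ℝ := fun s => G ((0:ℂ) + s • e) e - g1e - s * A with hv
  have hwd : ∀ s : ℝ, |s| ≤ r → HasDerivAt w (v s) s := by
    intro s hs
    have h1 := lineDeriv1 hS hb e (hmem s hs)
    have h2 : HasDerivAt (fun s : ℝ => s * g1e) g1e s := by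
      simpa using (hasDerivAt_id s).mul_const g1e
    have h3 : HasDerivAt (fun s : ℝ => s^2 * (A/2)) (s * A) s := by
      have := (hasDerivAt_pow 2 s).mul_const (A/2)
      exact this.congr_deriv (by norm_num; ring)
    exact ((h1.sub_const (b 0)).sub h2).sub h3
  have hvd : ∀ s : ℝ, |s| ≤ r → HasDerivAt v (Hs ((0:ℂ) + s • e) e e - A) s := by
    intro s hs
    have h1 := lineDeriv2' hS hb e (hmem s hs)
    have h2 : HasDerivAt (fun s : ℝ => s * A) A s := by
      simpa using (hasDerivAt_id s).mul_const A
    have := (h1.sub_const g1e).sub h2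
    exact this
  -- continuity of the second-derivative integrand
  have hHcont : ContinuousOn Hs S := by
    have : ContDiffOn ℝ ∞ G S := hb.fderiv_of_isOpen hS (by simp)
    exact this.continuousOn_fderiv_of_isOpen hS (by simp)
  have hcont2 : ∀ s : ℝ, |s| ≤ r → ContinuousOn
      (fun σ : ℝ => Hs ((0:ℂ) + σ • e) e e - A) (Set.uIcc 0 s) := by
    intro s hs
    apply ContinuousOn.sub _ continuousOn_const
    have hline : Continuous (fun σ : ℝ => (0:ℂ) + σ • e) := by fun_prop
    have himg : ∀ σ ∈ Set.uIcc (0:ℝ) s, (0:ℂ) + σ • e ∈ S := by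
      intro σ hσ
      apply hmem
      rw [Set.uIcc_eq_union] at hσ
      rcases hσ with h | h
      · rcases Set.mem_Icc.1 h with ⟨h1, h2⟩
        rw [abs_le]; constructor <;> [linarith [abs_nonneg s, le_abs_self s, neg_abs_le s]; linarith [le_abs_self s]]
      · rcases Set.mem_Icc.1 h with ⟨h1, h2⟩
        rw [abs_le]; constructor <;> [linarith [neg_abs_le s]; linarith [le_abs_self s, abs_nonneg s]]
    have := (hHcont.comp hline.continuousOn (fun σ hσ => himg σ hσ))
    -- now apply e twice continuously
    exact ContinuousOn.clm_apply (ContinuousOn.clm_apply this continuousOn_const) continuousOn_const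
  -- bound on v via FTC
  have hvbound : ∀ s : ℝ, 0 ≤ s → s ≤ r → |v s| ≤ η * s := by
    intro s h0s hsr
    have habs : ∀ σ : ℝ, σ ∈ Set.uIcc (0:ℝ) s → |σ| ≤ r := by
      intro σ hσ
      rw [Set.uIcc_of_le h0s] at hσ
      rcases Set.mem_Icc.1 hσ with ⟨h1, h2⟩
      rw [abs_le]; constructor <;> linarith
    have hftc : ∫ σ in (0:ℝ)..s, (Hs ((0:ℂ) + σ • e) e e - A) = v s - v 0 := by
      apply intervalIntegral.integral_eq_sub_of_hasDerivAt
      · intro σ hσ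
        exact hvd σ (habs σ hσ)
      · exact (hcont2 s (by rw [_root_.abs_of_nonneg h0s]; exact hsr)).intervalIntegrable
    have hv0 : v 0 = 0 := by simp [hv, hg1e]
    rw [hv0, sub_zero] at hftc
    rw [← hftc]
    have := intervalIntegral.norm_integral_le_of_norm_le_const (C := η)
      (f := fun σ : ℝ => Hs ((0:ℂ) + σ • e) e e - A) (a := 0) (b := s) ?_
    · calc |∫ σ in (0:ℝ)..s, (Hs ((0:ℂ) + σ • e) e e - A)| ≤ η * |s - 0| := this
        _ = η * s := by rw [sub_zero, _root_.abs_of_nonneg h0s]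
    · intro σ hσ
      show ‖Hs ((0:ℂ) + σ • e) e e - A‖ ≤ η
      have hσr : |σ| ≤ r := by
        rcases Set.mem_Ioc.1 (Set.uIoc_of_le h0s ▸ hσ) with ⟨h1, h2⟩
        rw [abs_le]; constructor <;> linarith
      have hmemσ := hmem σ hσr
      have heq : Hs ((0:ℂ) + σ • e) e e - A
          = ((Hs ((0:ℂ) + σ • e) - Hs 0) e) e := by
        simp [hA]
      rw [Real.norm_eq_abs, heq]
      
      have h1 : ‖((Hs ((0:ℂ) + σ • e) - Hs 0) e) e‖ ≤ ‖(Hs ((0:ℂ) + σ • e) - Hs 0) e‖ * ‖e‖ :=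
        ContinuousLinearMap.le_opNorm _ e
      have h2 : ‖(Hs ((0:ℂ) + σ • e) - Hs 0) e‖ ≤ ‖Hs ((0:ℂ) + σ • e) - Hs 0‖ * ‖e‖ :=
        ContinuousLinearMap.le_opNorm _ e
      have he' : ‖e‖ = 1 := by rw [he]
      have h3 : ‖Hs ((0:ℂ) + σ • e) - Hs 0‖ ≤ η := by
        apply hH
        rw [zero_add]
        have : ‖(σ • e)‖ = |σ| * ‖e‖ := by
          rw [Complex.real_smul, norm_mul, Complex.norm_real, Real.norm_eq_abs]
        rw [this, he, mul_one]; exact hσr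
      rw [Real.norm_eq_abs] at h1
      rw [he', mul_one] at h1 h2
      calc |((Hs ((0:ℂ) + σ • e) - Hs 0) e) e| ≤ ‖(Hs ((0:ℂ) + σ • e) - Hs 0) e‖ := h1
        _ ≤ η := le_trans h2 h3
  -- bound on w via FTC
  have hwftc : ∫ s in (0:ℝ)..r, v s = w r - w 0 := by
    apply intervalIntegral.integral_eq_sub_of_hasDerivAt
    · intro s hs
      apply hwd
      rcases Set.mem_Icc.1 ((Set.uIcc_of_le (le_of_lt hr)) ▸ hs) with ⟨h1, h2⟩
      rw [abs_le]; constructor <;> linarith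
    · -- v is continuous on [0, r]
      apply ContinuousOn.intervalIntegrable
      apply ContinuousOn.sub
      apply ContinuousOn.sub
      · have hline : Continuous (fun σ : ℝ => (0:ℂ) + σ • e) := by fun_prop
        have hGcont : ContinuousOn G S := by
          have : ContDiffOn ℝ ∞ G S := hb.fderiv_of_isOpen hS (by simp)
          exact this.continuousOn
        have himg : ∀ σ ∈ Set.uIcc (0:ℝ) r, (0:ℂ) + σ • e ∈ S := by
          intro σ hσ
          apply hmem
          rcases Set.mem_Icc.1 ((Set.uIcc_of_le (le_of_lt hr)) ▸ hσ) with ⟨h1, h2⟩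
          rw [abs_le]; constructor <;> linarith
        exact ContinuousOn.clm_apply (hGcont.comp hline.continuousOn himg) continuousOn_const
      · exact continuousOn_const
      · exact (continuous_id.mul continuous_const).continuousOn
  have hw0 : w 0 = 0 := by simp [hw]
  rw [hw0, sub_zero] at hwftc
  have hwr : |w r| ≤ (η * r) * r := by
    rw [← hwftc]
    have := intervalIntegral.norm_integral_le_of_norm_le_const (C := η * r)
      (f := v) (a := 0) (b := r) ?_
    · calc |∫ s in (0:ℝ)..r, v s| ≤ (η*r) * |r - 0| := this
        _ = (η*r)*r := by rw [sub_zero, _root_.abs_of_nonneg (le_of_lt hr)]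
    · intro s hs
      rcases Set.mem_Ioc.1 ((Set.uIoc_of_le (le_of_lt hr)) ▸ hs) with ⟨h1, h2⟩
      show ‖v s‖ ≤ η * r
      rw [Real.norm_eq_abs]
      calc |v s| ≤ η * s := hvbound s (le_of_lt h1) h2
        _ ≤ η * r := by nlinarith
  -- conclude
  have : w r = b ((r:ℝ) • e) - b 0 - r * g1e - r^2 * (A/2) := by
    simp [hw]
  rw [← this]
  calc |w r| ≤ (η*r)*r := hwr
    _ = η * r^2 := by ring

/-- expansion of the Hessian on the unit circle vector -/
lemma circleVec (θ : ℝ) : Complex.exp ((θ:ℂ) * Complex.I)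
    = (Real.cos θ : ℝ) • (1:ℂ) + (Real.sin θ : ℝ) • Complex.I := by
  rw [Complex.exp_mul_I]
  simp [Complex.real_smul, ← Complex.ofReal_cos, ← Complex.ofReal_sin]

set_option maxHeartbeats 1000000 in
lemma subMean_lap_nonneg {b : ℂ → ℝ} {S : Set ℂ} (hS : IsOpen S) (h0 : (0:ℂ) ∈ S)
    (hb : ContDiffOn ℝ ∞ b S) {r₁ : ℝ} (hr₁ : 0 < r₁)
    (hm : ∀ r : ℝ, 0 < r → r < r₁ →
      b 0 ≤ (1 / (2 * Real.pi)) * ∫ θ in (0:ℝ)..(2*Real.pi),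
        b (((r:ℝ):ℂ) * Complex.exp ((θ:ℂ) * Complex.I))) :
    0 ≤ fderiv ℝ (fderiv ℝ b) 0 1 1
      + fderiv ℝ (fderiv ℝ b) 0 Complex.I Complex.I := by
  set G := fderiv ℝ b with hGdef
  set Hs := fderiv ℝ G with hHdef
  set L : ℝ := Hs 0 1 1 + Hs 0 I I with hL
  suffices h : ∀ η : ℝ, 0 < η → -(4*η) ≤ L by
    by_contra hneg
    push_neg at hneg
    have := h (-L/8) (by linarith)
    linarith
  intro η hη
  -- continuity of Hs at 0
  have hGc : ContDiffOn ℝ ∞ G S := hb.fderiv_of_isOpen hS (by simp)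
  have hHcont : ContinuousOn Hs S := hGc.continuousOn_fderiv_of_isOpen hS (by simp)
  have hHat : ContinuousAt Hs 0 := hHcont.continuousAt (hS.mem_nhds h0)
  obtain ⟨δ₁, hδ₁, hδball⟩ := Metric.isOpen_iff.1 hS 0 h0
  obtain ⟨δ₂, hδ₂, hδH⟩ := (Metric.continuousAt_iff (α := ℂ) (β := ℂ →L[ℝ] ℂ →L[ℝ] ℝ)).1 hHat η hη
  set r : ℝ := min (min (δ₁/2) (δ₂/2)) (r₁/2) with hrdef
  have hr : 0 < r := by positivity
  have hrr₁ : r < r₁ := by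
    calc r ≤ r₁/2 := min_le_right _ _
      _ < r₁ := by linarith
  have hball : ∀ x : ℂ, ‖x‖ ≤ r → x ∈ S := by
    intro x hx
    apply hδball
    rw [Metric.mem_ball, Complex.dist_eq, sub_zero]
    calc ‖x‖ ≤ r := hx
      _ ≤ δ₁/2 := le_trans (min_le_left _ _) (min_le_left _ _)
      _ < δ₁ := by linarith
  have hHb : ∀ x : ℂ, ‖x‖ ≤ r → ‖Hs x - Hs 0‖ ≤ η := by
    intro x hx
    have : dist x 0 < δ₂ := by
      rw [Complex.dist_eq, sub_zero]
      calc ‖x‖ ≤ r := hx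
        _ ≤ δ₂/2 := le_trans (min_le_left _ _) (min_le_right _ _)
        _ < δ₂ := by linarith
    have := hδH this
    rw [dist_eq_norm (Hs x) (Hs 0)] at this
    exact le_of_lt this
  -- per-θ Taylor bound
  have hcs : ∀ θ : ℝ, ‖(Complex.exp ((θ:ℂ) * Complex.I))‖ = 1 := by
    intro θ; exact Complex.norm_exp_ofReal_mul_I θ
  set a11 : ℝ := Hs 0 1 1 with ha11
  set a1I : ℝ := Hs 0 1 I with ha1I
  set aI1 : ℝ := Hs 0 I 1 with haI1
  set aII : ℝ := Hs 0 I I with haII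
  set g1 : ℝ := G 0 1 with hg1
  set gI : ℝ := G 0 I with hgI
  set Afun : ℝ → ℝ := fun θ => Real.cos θ ^2 * a11 + Real.cos θ * Real.sin θ * (a1I + aI1)
    + Real.sin θ ^2 * aII with hAfun
  set Bfun : ℝ → ℝ := fun θ => Real.cos θ * g1 + Real.sin θ * gI with hBfun
  have hGe : ∀ θ : ℝ, G 0 (Complex.exp ((θ:ℂ) * Complex.I)) = Bfun θ := by
    intro θ
    rw [circleVec θ, map_add, _root_.map_smul, _root_.map_smul]
    show Real.cos θ • (G 0 1) + Real.sin θ • (G 0 I) = Bfun θ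
    rw [smul_eq_mul, smul_eq_mul]
  have hHe : ∀ θ : ℝ, Hs 0 (Complex.exp ((θ:ℂ) * Complex.I)) (Complex.exp ((θ:ℂ) * Complex.I))
      = Afun θ := by
    intro θ
    rw [circleVec θ]
    simp only [map_add, _root_.map_smul, ContinuousLinearMap.add_apply,
      ContinuousLinearMap.smul_apply, smul_eq_mul]
    show Real.cos θ * (Real.cos θ * (Hs 0 1 1) + Real.sin θ * (Hs 0 I 1))
      + Real.sin θ * (Real.cos θ * (Hs 0 1 I) + Real.sin θ * (Hs 0 I I))
      = Real.cos θ ^2 * (Hs 0 1 1) + Real.cos θ * Real.sin θ * ((Hs 0 1 I) + (Hs 0 I 1))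
      + Real.sin θ ^2 * (Hs 0 I I)
    ring
  set Wfun : ℝ → ℝ := fun θ => b (((r:ℝ):ℂ) * Complex.exp ((θ:ℂ) * Complex.I)) - b 0
    - r * Bfun θ - r^2 * (Afun θ / 2) with hWfun
  have hWbound : ∀ θ : ℝ, |Wfun θ| ≤ η * r^2 := by
    intro θ
    have := rayTaylor hS hb (le_of_lt hη) hr (Complex.exp ((θ:ℂ) * Complex.I)) (hcs θ)
      hball hHb
    rw [← hGdef, ← hHdef] at this
    rw [hGe θ, hHe θ] at this
    have hsm : (r:ℝ) • Complex.exp ((θ:ℂ) * Complex.I)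
        = ((r:ℝ):ℂ) * Complex.exp ((θ:ℂ) * Complex.I) := Complex.real_smul
    rw [hsm] at this
    exact this
  -- integrability
  have hbc : Continuous (fun θ : ℝ => b (((r:ℝ):ℂ) * Complex.exp ((θ:ℂ) * Complex.I))) := by
    have hmap : Continuous (fun θ : ℝ => ((r:ℝ):ℂ) * Complex.exp ((θ:ℂ) * Complex.I)) := by
      fun_prop
    apply (hb.continuousOn).comp_continuous hmap
    intro θ
    apply hball
    rw [norm_mul, Complex.norm_real, Real.norm_eq_abs, hcs θ, mul_one, _root_.abs_of_pos hr]
  have hAc : Continuous Afun := by fun_prop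
  have hBc : Continuous Bfun := by fun_prop
  have hWc : Continuous Wfun := by
    apply ((hbc.sub continuous_const).sub (continuous_const.mul hBc)).sub
    fun_prop
  -- integral identities
  have hIcos : ∫ θ in (0:ℝ)..(2*π), Real.cos θ = 0 := by
    rw [integral_cos]; simp
  have hIsin : ∫ θ in (0:ℝ)..(2*π), Real.sin θ = 0 := by
    rw [integral_sin]; simp
  have hIcos2 : ∫ θ in (0:ℝ)..(2*π), Real.cos θ ^ 2 = π := by
    rw [integral_cos_sq]
    rw [Real.sin_two_pi, Real.cos_two_pi, Real.sin_zero, Real.cos_zero]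
    ring
  have hIsin2 : ∫ θ in (0:ℝ)..(2*π), Real.sin θ ^ 2 = π := by
    rw [integral_sin_sq]
    rw [Real.sin_two_pi, Real.cos_two_pi, Real.sin_zero, Real.cos_zero]
    ring
  have hIsc : ∫ θ in (0:ℝ)..(2*π), Real.sin θ * Real.cos θ = 0 := by
    rw [integral_sin_mul_cos₁]; simp
  have hIB : ∫ θ in (0:ℝ)..(2*π), Bfun θ = 0 := by
    show ∫ θ in (0:ℝ)..(2*π), (Real.cos θ * g1 + Real.sin θ * gI) = 0
    rw [intervalIntegral.integral_add (f := fun θ => Real.cos θ * g1) (g := fun θ => Real.sin θ * gI) ((Real.continuous_cos.mul continuous_const).intervalIntegrable _ _)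
      ((Real.continuous_sin.mul continuous_const).intervalIntegrable _ _)]
    rw [intervalIntegral.integral_mul_const, intervalIntegral.integral_mul_const, hIcos, hIsin]
    ring
  have hIA : ∫ θ in (0:ℝ)..(2*π), Afun θ = π * (a11 + aII) := by
    have i1 : IntervalIntegrable (fun θ : ℝ => Real.cos θ ^2 * a11) MeasureTheory.volume 0 (2*π) :=
      ((Real.continuous_cos.pow 2).mul continuous_const).intervalIntegrable _ _
    have i2 : IntervalIntegrable (fun θ : ℝ => Real.cos θ * Real.sin θ * (a1I + aI1)) MeasureTheory.volume 0 (2*π) :=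
      ((Real.continuous_cos.mul Real.continuous_sin).mul continuous_const).intervalIntegrable _ _
    have i3 : IntervalIntegrable (fun θ : ℝ => Real.sin θ ^2 * aII) MeasureTheory.volume 0 (2*π) :=
      ((Real.continuous_sin.pow 2).mul continuous_const).intervalIntegrable _ _
    show ∫ θ in (0:ℝ)..(2*π), (Real.cos θ ^2 * a11 + Real.cos θ * Real.sin θ * (a1I + aI1)
      + Real.sin θ ^2 * aII) = π * (a11 + aII)
    rw [intervalIntegral.integral_add (i1.add i2) i3, intervalIntegral.integral_add i1 i2]
    rw [intervalIntegral.integral_mul_const, intervalIntegral.integral_mul_const,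
      intervalIntegral.integral_mul_const, hIcos2, hIsin2]
    have hcs0 : ∫ θ in (0:ℝ)..(2*π), Real.cos θ * Real.sin θ = 0 := by
      rw [show (fun θ : ℝ => Real.cos θ * Real.sin θ) = fun θ : ℝ => Real.sin θ * Real.cos θ by
        funext θ; ring]
      exact hIsc
    rw [hcs0]
    ring
  have hIW : |∫ θ in (0:ℝ)..(2*π), Wfun θ| ≤ η * r^2 * (2*π) := by
    have := intervalIntegral.norm_integral_le_of_norm_le_const (C := η * r^2)
      (f := Wfun) (a := 0) (b := 2*π) ?_
    · calc |∫ θ in (0:ℝ)..(2*π), Wfun θ| ≤ η*r^2 * |2*π - 0| := this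
        _ = η * r^2 * (2*π) := by
            rw [sub_zero, _root_.abs_of_pos (by positivity : (0:ℝ) < 2*π)]
    · intro θ _
      exact hWbound θ
  -- expand the mean inequality
  have hsplit : ∫ θ in (0:ℝ)..(2*π), b (((r:ℝ):ℂ) * Complex.exp ((θ:ℂ) * Complex.I))
      = 2*π * b 0 + r * (∫ θ in (0:ℝ)..(2*π), Bfun θ)
        + r^2/2 * (∫ θ in (0:ℝ)..(2*π), Afun θ) + ∫ θ in (0:ℝ)..(2*π), Wfun θ := by
    have hfeq : (fun θ : ℝ => b (((r:ℝ):ℂ) * Complex.exp ((θ:ℂ) * Complex.I)))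
        = fun θ => (b 0 + r * Bfun θ + r^2/2 * (Afun θ) + Wfun θ) := by
      funext θ
      rw [hWfun]
      ring
    have j0 : IntervalIntegrable (fun _ : ℝ => b 0) MeasureTheory.volume 0 (2*π) :=
      intervalIntegrable_const
    have jB : IntervalIntegrable (fun θ : ℝ => r * Bfun θ) MeasureTheory.volume 0 (2*π) :=
      (continuous_const.mul hBc).intervalIntegrable _ _
    have jA : IntervalIntegrable (fun θ : ℝ => r^2/2 * Afun θ) MeasureTheory.volume 0 (2*π) :=
      (continuous_const.mul hAc).intervalIntegrable _ _
    rw [hfeq]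
    rw [intervalIntegral.integral_add ((j0.add jB).add jA) (hWc.intervalIntegrable _ _),
      intervalIntegral.integral_add (j0.add jB) jA,
      intervalIntegral.integral_add j0 jB]
    rw [intervalIntegral.integral_const, intervalIntegral.integral_const_mul,
      intervalIntegral.integral_const_mul]
    simp only [sub_zero, smul_eq_mul]
  have hmr := hm r hr hrr₁
  rw [hsplit, hIB, hIA] at hmr
  have hπ : 0 < π := Real.pi_pos
  -- b 0 ≤ (1/(2π)) * (2π b0 + 0 + (r²/2) π (a11+aII) + W)
  have hW := hIW
  have habs := abs_le.1 hW
  rw [hL]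
  clear_value a11 a1I aI1 aII g1 gI L
  set W : ℝ := ∫ θ in (0:ℝ)..(2*π), Wfun θ with hWint
  clear_value W
  have h2π : (0:ℝ) < 2*π := by positivity
  rw [div_mul_eq_mul_div, le_div_iff₀ h2π] at hmr
  nlinarith [hmr, habs.1, hr, hπ, mul_pos hπ (mul_pos hr hr),
    mul_pos (mul_pos hr hr) hη]

/-- Chain rule for line-restricted second derivatives of a smooth function composed
with a holomorphic map. -/
lemma chainC {E : Type*} [NormedAddCommGroup E] [NormedSpace ℝ E] [NormedSpace ℂ E]
    [IsScalarTower ℝ ℂ E] [CompleteSpace E]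
    {ψ : E → ℝ} {S : Set E} (hS : IsOpen S) (hψ : ContDiffOn ℝ ∞ ψ S)
    {f : ℂ → E} {T : Set ℂ} (hT : IsOpen T) (hf : DifferentiableOn ℂ f T)
    {ζ : ℂ} (hζ : ζ ∈ T) (hfζ : f ζ ∈ S) (e : ℂ) :
    ∃ g : ℝ → ℝ,
      (∀ᶠ s in nhds (0:ℝ), HasDerivAt (fun τ : ℝ => ψ (f (ζ + τ • e))) (g s) s) ∧
      HasDerivAt g
        (fderiv ℝ (fderiv ℝ ψ) (f ζ) (e • deriv f ζ) (e • deriv f ζ)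
          + fderiv ℝ ψ (f ζ) ((e*e) • deriv (deriv f) ζ)) 0 := by
  set Gψ := fderiv ℝ ψ with hGψ
  set Hψ := fderiv ℝ Gψ with hHψ
  set v := deriv f with hv
  -- open set where everything is defined
  set T' : Set ℂ := T ∩ f ⁻¹' S with hT'
  have hT'open : IsOpen T' := hf.continuousOn.isOpen_inter_preimage hT hS
  have hζT' : ζ ∈ T' := ⟨hζ, hfζ⟩
  have hline : Continuous (fun s : ℝ => ζ + s • e) := by fun_prop
  have hnb : ∀ᶠ s in nhds (0:ℝ), ζ + s • e ∈ T' := by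
    have h0 : (fun s : ℝ => ζ + s • e) 0 ∈ T' := by simpa using hζT'
    exact hline.continuousAt.preimage_mem_nhds (hT'open.mem_nhds h0)
  -- derivative of f and of deriv f
  have hfd : ∀ x ∈ T, HasDerivAt f (v x) x := fun x hx =>
    (hf.differentiableAt (hT.mem_nhds hx)).hasDerivAt
  have hA : AnalyticOnNhd ℂ f T := hf.analyticOnNhd hT
  have hvd : HasDerivAt v (deriv v ζ) ζ := ((hA.deriv ζ hζ).differentiableAt).hasDerivAt
  -- the curve
  have hcurve : ∀ s : ℝ, ζ + s • e ∈ T →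
      HasDerivAt (fun τ : ℝ => f (ζ + τ • e)) (e • v (ζ + s • e)) s := by
    intro s hs
    exact (hfd _ hs).scomp s (lineMapHasDerivAt ζ e s)
  set g : ℝ → ℝ := fun s => Gψ (f (ζ + s • e)) (e • v (ζ + s • e)) with hg
  refine ⟨g, ?_, ?_⟩
  · filter_upwards [hnb] with s hs
    have hψd : HasFDerivAt ψ (Gψ (f (ζ + s • e))) (f (ζ + s • e)) :=
      ((hψ.differentiableOn (by norm_num)).differentiableAt
        (hS.mem_nhds hs.2)).hasFDerivAt
    exact hψd.comp_hasDerivAt s (hcurve s hs.1)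
  · -- derivative of g at 0
    have hC : HasDerivAt (fun s : ℝ => Gψ (f (ζ + s • e))) (Hψ (f ζ) (e • v ζ)) 0 := by
      have hGd : DifferentiableAt ℝ Gψ (f ζ) := by
        have : ContDiffOn ℝ ∞ Gψ S := hψ.fderiv_of_isOpen hS (by simp)
        exact (this.differentiableOn (by norm_num)).differentiableAt (hS.mem_nhds hfζ)
      have hc0 : HasDerivAt (fun τ : ℝ => f (ζ + τ • e)) (e • v ζ) 0 := by
        have := hcurve 0 (by simpa using hζ)
        simpa using this
      have := hGd.hasFDerivAt.comp_hasDerivAt_of_eq 0 hc0 (by simp)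
      exact this
    have hD : HasDerivAt (fun s : ℝ => e • v (ζ + s • e)) (e • (e • deriv v ζ)) 0 := by
      have hvd' : HasDerivAt v (deriv v ζ) (ζ + (0:ℝ) • e) := by
        simpa only [zero_smul, add_zero] using hvd
      have h1 : HasDerivAt (fun τ : ℝ => v (ζ + τ • e)) (e • deriv v ζ) 0 :=
        HasDerivAt.scomp (g₁ := v) (h := fun τ : ℝ => ζ + τ • e) (0:ℝ) hvd' (lineMapHasDerivAt ζ e 0)
      exact h1.const_smul e
    have := hC.clm_apply hD
    exact this.congr_deriv (by rw [smul_smul]; norm_num)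

lemma levi_nonneg {E : Type*} [NormedAddCommGroup E] [NormedSpace ℝ E] [NormedSpace ℂ E]
    [IsScalarTower ℝ ℂ E] [CompleteSpace E]
    {Ω : Set E} (hΩ : IsOpen Ω) {φ : E → ℝ} (hφ : ContDiffOn ℝ ∞ φ Ω)
    (hpsh : IsPSH Ω φ) {q : E} (hq : q ∈ Ω) (w : E) :
    0 ≤ fderiv ℝ (fderiv ℝ φ) q w w
      + fderiv ℝ (fderiv ℝ φ) q (Complex.I • w) (Complex.I • w) := by
  set L : ℂ → E := fun t => q + t • w with hLdef
  have hLd : Differentiable ℂ L := by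
    apply Differentiable.const_add
    exact fun t => ((hasDerivAt_id t).smul_const w).differentiableAt
  have hLderiv : ∀ t : ℂ, HasDerivAt L w t := by
    intro t
    have := ((hasDerivAt_id t).smul_const w).const_add q
    exact this.congr_deriv (one_smul _ _)
  have hLd1 : deriv L = fun _ => w := funext fun t => (hLderiv t).deriv
  have hLd2 : deriv (deriv L) = fun _ => 0 := by
    rw [hLd1]; funext t; exact deriv_const t w
  have hLc : Continuous L := hLd.continuous
  set Sb : Set ℂ := L ⁻¹' Ω with hSb
  have hSbo : IsOpen Sb := hΩ.preimage hLc
  have h0Sb : (0:ℂ) ∈ Sb := by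
    show L 0 ∈ Ω
    simp only [hLdef, zero_smul, add_zero]
    exact hq
  set b : ℂ → ℝ := fun t => φ (L t) with hbdef
  have hbC : ContDiffOn ℝ ∞ b Sb := by
    have hLC : ContDiff ℝ ∞ L := (hLd.contDiff (n := ∞)).restrict_scalars ℝ
    exact hφ.comp hLC.contDiffOn (fun x hx => hx)
  -- the mean-value hypothesis from IsPSH
  obtain ⟨ρ, hρ, hρball⟩ := Metric.isOpen_iff.1 hΩ q hq
  have hm : ∀ r : ℝ, 0 < r → r < ρ/(‖w‖+1) →
      b 0 ≤ (1 / (2 * Real.pi)) * ∫ θ in (0:ℝ)..(2*Real.pi),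
        b (((r:ℝ):ℂ) * Complex.exp ((θ:ℂ) * Complex.I)) := by
    intro r hr hrρ
    have hdisc : ∀ t : ℂ, ‖t‖ ≤ r → q + t • w ∈ Ω := by
      intro t ht
      apply hρball
      rw [Metric.mem_ball, dist_eq_norm, add_sub_cancel_left, norm_smul]
      have h1 : ‖t‖ ≤ r := by exact ht
      have h2 : ‖w‖ < ‖w‖ + 1 := by linarith
      calc ‖t‖ * ‖w‖ ≤ r * ‖w‖ := by
            apply mul_le_mul_of_nonneg_right h1 (norm_nonneg w)
        _ < ρ := by
            have := (lt_div_iff₀ (by positivity : (0:ℝ) < ‖w‖+1)).1 hrρ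
            nlinarith [norm_nonneg w, hr]
    have := hpsh q hq w r hr hdisc
    have hb0 : b 0 = φ q := by
      show φ (q + (0:ℂ) • w) = φ q
      rw [zero_smul, add_zero]
    rw [hb0]
    exact this
  have hρw : 0 < ρ/(‖w‖+1) := by positivity
  have hsub := subMean_lap_nonneg hSbo h0Sb hbC hρw hm
  -- chain rule, direction 1
  obtain ⟨g1, hg1, hg1d⟩ := chainC hΩ hφ isOpen_univ hLd.differentiableOn
    (mem_univ (0:ℂ)) h0Sb 1
  obtain ⟨gI, hgI, hgId⟩ := chainC hΩ hφ isOpen_univ hLd.differentiableOn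
    (mem_univ (0:ℂ)) h0Sb Complex.I
  have hL0 : L 0 = q := by simp [hLdef]
  have hval1 : fderiv ℝ (fderiv ℝ φ) (L 0) ((1:ℂ) • deriv L 0) ((1:ℂ) • deriv L 0)
      + fderiv ℝ φ (L 0) (((1:ℂ)*(1:ℂ)) • deriv (deriv L) 0)
      = fderiv ℝ (fderiv ℝ φ) q w w := by
    rw [hL0, hLd1]
    simp
  have hvalI : fderiv ℝ (fderiv ℝ φ) (L 0) ((Complex.I) • deriv L 0) ((Complex.I) • deriv L 0)
      + fderiv ℝ φ (L 0) ((Complex.I*Complex.I) • deriv (deriv L) 0)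
      = fderiv ℝ (fderiv ℝ φ) q (Complex.I • w) (Complex.I • w) := by
    rw [hL0, hLd1]
    simp
  rw [hval1] at hg1d
  rw [hvalI] at hgId
  have he1 := lapEq hSbo hbC h0Sb 1 hg1 hg1d
  have heI := lapEq hSbo hbC h0Sb Complex.I hgI hgId
  rw [← he1, ← heI] at hsub
  exact hsub

def l1 : (ℂ × ℂ) →L[ℝ] ℝ := Complex.reCLM.comp (ContinuousLinearMap.fst ℝ ℂ ℂ)
def l2 : (ℂ × ℂ) →L[ℝ] ℝ := Complex.imCLM.comp (ContinuousLinearMap.fst ℝ ℂ ℂ)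
def l3 : (ℂ × ℂ) →L[ℝ] ℝ := Complex.reCLM.comp (ContinuousLinearMap.snd ℝ ℂ ℂ)
def l4 : (ℂ × ℂ) →L[ℝ] ℝ := Complex.imCLM.comp (ContinuousLinearMap.snd ℝ ℂ ℂ)

def TSq : (ℂ × ℂ) →L[ℝ] ((ℂ × ℂ) →L[ℝ] ℝ) :=
  (2:ℝ) • (l1.smulRight l1 + l2.smulRight l2 + l3.smulRight l3 + l4.smulRight l4)

lemma eSq_eq : eSq = fun q => l1 q * l1 q + l2 q * l2 q + l3 q * l3 q + l4 q * l4 q := by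
  funext q
  simp only [eSq, Complex.sq_norm, Complex.normSq_apply, l1, l2, l3, l4,
    ContinuousLinearMap.comp_apply, ContinuousLinearMap.coe_fst', ContinuousLinearMap.coe_snd',
    Complex.reCLM_apply, Complex.imCLM_apply]
  ring

lemma eSq_contDiff : ContDiff ℝ ∞ eSq := by
  rw [eSq_eq]
  exact (((l1.contDiff.mul l1.contDiff).add (l2.contDiff.mul l2.contDiff)).add
    (l3.contDiff.mul l3.contDiff)).add (l4.contDiff.mul l4.contDiff)

lemma eSq_hasFDerivAt (q : ℂ × ℂ) : HasFDerivAt eSq (TSq q) q := by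
  have h : HasFDerivAt (fun q => l1 q * l1 q + l2 q * l2 q + l3 q * l3 q + l4 q * l4 q)
      ((l1 q • l1 + l1 q • l1) + (l2 q • l2 + l2 q • l2) + (l3 q • l3 + l3 q • l3)
        + (l4 q • l4 + l4 q • l4)) q := by
    exact (((l1.hasFDerivAt.mul l1.hasFDerivAt).add
      (l2.hasFDerivAt.mul l2.hasFDerivAt)).add
      (l3.hasFDerivAt.mul l3.hasFDerivAt)).add
      (l4.hasFDerivAt.mul l4.hasFDerivAt)
  rw [eSq_eq]
  convert h using 1
  refine ContinuousLinearMap.ext fun w => ?_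
  simp only [TSq, ContinuousLinearMap.smul_apply, ContinuousLinearMap.add_apply,
    ContinuousLinearMap.smulRight_apply, smul_eq_mul]
  ring

lemma eSq_fderiv : fderiv ℝ eSq = fun q => TSq q :=
  funext fun q => (eSq_hasFDerivAt q).fderiv

lemma eSq_lap (q w : ℂ × ℂ) :
    fderiv ℝ (fderiv ℝ eSq) q w w
      = 2 * (l1 w ^2 + l2 w ^2 + l3 w ^2 + l4 w ^2) := by
  rw [eSq_fderiv]
  have : fderiv ℝ (fun q => TSq q) q = TSq := TSq.fderiv
  rw [this]
  simp only [TSq, ContinuousLinearMap.smul_apply, ContinuousLinearMap.add_apply,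
    ContinuousLinearMap.smulRight_apply, smul_eq_mul]
  ring

lemma eSq_levi (q w : ℂ × ℂ) :
    fderiv ℝ (fderiv ℝ eSq) q w w
      + fderiv ℝ (fderiv ℝ eSq) q (Complex.I • w) (Complex.I • w)
      = 4 * (‖w.1‖ ^2 + ‖w.2‖ ^2) := by
  rw [eSq_lap, eSq_lap]
  have h1 : l1 (Complex.I • w) = - l2 w := by
    simp [l1, l2, Complex.I_mul_re ]
  have h2 : l2 (Complex.I • w) = l1 w := by
    simp [l1, l2]
  have h3 : l3 (Complex.I • w) = - l4 w := by
    simp [l3, l4]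
  have h4 : l4 (Complex.I • w) = l3 w := by
    simp [l3, l4]
  rw [h1, h2, h3, h4]
  have e1 : ‖w.1‖ ^ 2 = l1 w ^2 + l2 w ^2 := by
    simp [l1, l2, Complex.sq_norm, Complex.normSq_apply]
    ring
  have e2 : ‖w.2‖ ^ 2 = l3 w ^2 + l4 w ^2 := by
    simp [l3, l4, Complex.sq_norm, Complex.normSq_apply]
    ring
  rw [e1, e2]
  ring

/-- packaged line-derivative data with a Levi lower bound -/
def LeviLine (u : ℂ → ℝ) (ζ : ℂ) (c : ℝ) : Prop :=
  ∃ g1 gI : ℝ → ℝ, ∃ L1 LI : ℝ,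
    (∀ᶠ s in nhds (0:ℝ), HasDerivAt (fun τ : ℝ => u (ζ + τ • (1:ℂ))) (g1 s) s) ∧
    (∀ᶠ s in nhds (0:ℝ), HasDerivAt (fun τ : ℝ => u (ζ + τ • Complex.I)) (gI s) s) ∧
    HasDerivAt g1 L1 0 ∧ HasDerivAt gI LI 0 ∧ c ≤ L1 + LI

lemma normSqLine (x e : ℂ) :
    ∀ s : ℝ, HasDerivAt (fun τ : ℝ => Complex.normSq (x + τ • e))
      (2*(x * (starRingEnd ℂ) e).re + 2*Complex.normSq e*s) s := by
  have hfe : (fun τ : ℝ => Complex.normSq (x + τ • e))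
      = fun τ => Complex.normSq x + 2*(x * (starRingEnd ℂ) e).re*τ + Complex.normSq e * τ^2 := by
    funext τ
    rw [Complex.real_smul, Complex.normSq_add]
    rw [map_mul, Complex.normSq_ofReal]
    have : (x * (starRingEnd ℂ) ((τ:ℂ) * e)).re = τ * (x * (starRingEnd ℂ) e).re := by
      rw [map_mul, Complex.conj_ofReal]
      have : x * ((τ:ℂ) * (starRingEnd ℂ) e) = (τ:ℂ) * (x * (starRingEnd ℂ) e) := by ring
      rw [this, Complex.re_ofReal_mul]
    rw [this]
    ring
  intro s
  rw [hfe]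
  have h1 : HasDerivAt (fun τ : ℝ => Complex.normSq x + 2*(x * (starRingEnd ℂ) e).re*τ)
      (2*(x * (starRingEnd ℂ) e).re) s := by
    simpa using ((hasDerivAt_id s).const_mul (2*(x * (starRingEnd ℂ) e).re)).const_add
      (Complex.normSq x)
  have h2 : HasDerivAt (fun τ : ℝ => Complex.normSq e * τ^2) (Complex.normSq e * (2*s)) s := by
    simpa using (hasDerivAt_pow 2 s).const_mul (Complex.normSq e)
  have := h1.add h2
  exact this.congr_deriv (by ring)

lemma re_fderiv (q : ℂ) : fderiv ℝ (fun w : ℂ => Complex.reCLM w) q = Complex.reCLM := by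
  exact Complex.reCLM.hasFDerivAt.fderiv

lemma re_fderiv2 (x a b : ℂ) :
    fderiv ℝ (fderiv ℝ (fun w : ℂ => Complex.reCLM w)) x a b = 0 := by
  have h1 : fderiv ℝ (fun w : ℂ => Complex.reCLM w) = fun _ => Complex.reCLM :=
    funext fun q => re_fderiv q
  rw [h1]
  rw [fderiv_fun_const]
  simp

/-- line-derivative data for `log|ζ|` near a nonzero point, with Levi sum `0`. -/
lemma logLine (η : ℂ) (hη : η ≠ 0) :
    ∃ g1 gI : ℝ → ℝ, ∃ L1 LI : ℝ,
      (∀ᶠ s in nhds (0:ℝ), HasDerivAt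
        (fun τ : ℝ => Real.log (‖(η + τ • (1:ℂ))‖)) (g1 s) s) ∧
      (∀ᶠ s in nhds (0:ℝ), HasDerivAt
        (fun τ : ℝ => Real.log (‖(η + τ • Complex.I)‖)) (gI s) s) ∧
      HasDerivAt g1 L1 0 ∧ HasDerivAt gI LI 0 ∧ L1 + LI = 0 := by
  have hablpos : 0 < ‖η‖ := by
    simpa using hη
  set c : ℂ := ((‖η‖ : ℝ) : ℂ) / η with hc
  have hcη : c * η = ((‖η‖ : ℝ) : ℂ) := by
    rw [hc]; field_simp
  have habsc : ‖c‖ = 1 := by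
    rw [hc, norm_div, Complex.norm_real, Real.norm_eq_abs, abs_of_pos hablpos, div_self (ne_of_gt hablpos)]
  set flog : ℂ → ℂ := fun ζ => Complex.log (c * ζ) with hflog
  set Tlog : Set ℂ := {ζ : ℂ | c * ζ ∈ Complex.slitPlane ∧ ζ ≠ 0} with hTlog
  have hTo : IsOpen Tlog := by
    apply IsOpen.inter
    · exact Complex.isOpen_slitPlane.preimage (continuous_const.mul continuous_id)
    · exact isOpen_ne
  have hmemη : η ∈ Tlog := by
    constructor
    · rw [hcη]
      exact Complex.ofReal_mem_slitPlane.2 hablpos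
    · exact hη
  have hfd : DifferentiableOn ℂ flog Tlog := by
    intro ζ hζ
    have h1 : DifferentiableAt ℂ (fun ζ : ℂ => c * ζ) ζ := (differentiable_id.const_mul c) ζ
    exact ((Complex.differentiableAt_log hζ.1).comp ζ h1).differentiableWithinAt
  have hψ : ContDiffOn ℝ ∞ (fun w : ℂ => Complex.reCLM w) univ :=
    Complex.reCLM.contDiff.contDiffOn
  -- the equality of functions away from 0
  have hloge : ∀ ζ : ℂ, ζ ≠ 0 → Complex.reCLM (flog ζ) = Real.log (‖ζ‖) := by
    intro ζ hζ0
    show (Complex.log (c * ζ)).re = Real.log (‖ζ‖)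
    rw [Complex.log_re, norm_mul, habsc, one_mul]
  obtain ⟨g1, hg1ev, hg1d⟩ := chainC isOpen_univ hψ hTo hfd hmemη (mem_univ _) 1
  obtain ⟨gI, hgIev, hgId⟩ := chainC isOpen_univ hψ hTo hfd hmemη (mem_univ _) Complex.I
  refine ⟨g1, gI, _, _, ?_, ?_, hg1d, hgId, ?_⟩
  · -- transfer direction 1
    have hV : ∀ᶠ τ in nhds (0:ℝ), η + τ • (1:ℂ) ≠ 0 := by
      have hcont : Continuous (fun τ : ℝ => η + τ • (1:ℂ)) := by fun_prop
      have : (fun τ : ℝ => η + τ • (1:ℂ)) 0 ∈ ({0}ᶜ : Set ℂ) := by simpa using hη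
      exact hcont.continuousAt.preimage_mem_nhds (isOpen_ne.mem_nhds (by simpa using hη))
    filter_upwards [hg1ev, hV.eventually_nhds] with s hs hVs
    apply hs.congr_of_eventuallyEq
    filter_upwards [hVs] with τ hτ
    exact (hloge _ hτ).symm
  · have hV : ∀ᶠ τ in nhds (0:ℝ), η + τ • Complex.I ≠ 0 := by
      have hcont : Continuous (fun τ : ℝ => η + τ • Complex.I) := by fun_prop
      exact hcont.continuousAt.preimage_mem_nhds (isOpen_ne.mem_nhds (by simpa using hη))
    filter_upwards [hgIev, hV.eventually_nhds] with s hs hVs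
    apply hs.congr_of_eventuallyEq
    filter_upwards [hVs] with τ hτ
    exact (hloge _ hτ).symm
  · -- sum of second derivatives is zero
    rw [re_fderiv2, re_fderiv2, zero_add, zero_add]
    have h1 : ((1:ℂ)*(1:ℂ)) • deriv (deriv flog) η = deriv (deriv flog) η := by
      rw [one_mul, one_smul]
    have hI : (Complex.I*Complex.I) • deriv (deriv flog) η = -(deriv (deriv flog) η) := by
      rw [Complex.I_mul_I, neg_one_smul]
    rw [h1, hI, map_neg]
    ring

lemma globalMaxBound {u : ℂ → ℝ} (hu : Continuous u) {C : ℝ} (hC : ∀ ζ, u ζ ≤ C)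
    (hlev : ∀ ζ : ℂ, LeviLine u ζ 0)
    {δ : ℝ} (hδ : 0 < δ) {M : ℝ} (hM : ∀ ζ : ℂ, ‖ζ‖ = δ → u ζ ≤ M)
    (hMC : M ≤ C) :
    ∀ x : ℂ, δ < ‖x‖ → u x ≤ M := by
  intro x hx
  set K : ℝ := Real.log (‖x‖) - Real.log δ with hK
  have hKpos : 0 < K := by
    rw [hK, sub_pos]
    exact Real.log_lt_log hδ hx
  -- the bound for each R
  have hRbound : ∀ R : ℝ, δ + 1 ≤ R → ‖x‖ ≤ R →
      u x ≤ M + δ^2/R^2 + (C - M + 1) * K / (Real.log R - Real.log δ) := by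
    intro R hR1 hRx
    have hδR : δ < R := by linarith
    have hRpos : 0 < R := by linarith
    have hlogpos : 0 < Real.log R - Real.log δ := by
      rw [sub_pos]; exact Real.log_lt_log hδ hδR
    set γ : ℝ := 1/R^2 with hγ
    set β : ℝ := (C - M + 1)/(Real.log R - Real.log δ) with hβ
    have hγpos : 0 < γ := by positivity
    have hβpos : 0 < β := by
      apply div_pos (by linarith) hlogpos
    set h : ℂ → ℝ := fun ζ => u ζ + γ * Complex.normSq ζ
      - β * (Real.log (‖ζ‖) - Real.log δ) with hh
    set A : Set ℂ := {ζ : ℂ | δ ≤ ‖ζ‖ ∧ ‖ζ‖ ≤ R} with hA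
    have hAcomp : IsCompact A := by
      apply IsCompact.of_isClosed_subset (isCompact_closedBall (0:ℂ) R)
      · exact IsClosed.inter (isClosed_le continuous_const continuous_norm)
          (isClosed_le continuous_norm continuous_const)
      · intro ζ hζ
        rw [Metric.mem_closedBall, Complex.dist_eq, sub_zero]
        exact hζ.2
    have hxA : x ∈ A := ⟨le_of_lt hx, hRx⟩
    have hhc : ContinuousOn h A := by
      apply ContinuousOn.sub
      · exact (hu.continuousOn).add ((continuous_const.mul Complex.continuous_normSq).continuousOn)
      · apply ContinuousOn.mul continuousOn_const
        apply ContinuousOn.sub _ continuousOn_const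
        intro ζ hζ
        have hζ0 : ‖ζ‖ ≠ 0 := by
          have := hζ.1; intro h0; rw [h0] at this; linarith
        exact ((Real.continuousAt_log hζ0).comp
          continuous_norm.continuousAt).continuousWithinAt
    obtain ⟨η₀, hη₀A, hη₀max⟩ := hAcomp.exists_isMaxOn ⟨x, hxA⟩ hhc
    -- boundary bound for h η₀
    have hbdry : h η₀ ≤ M + γ * δ^2 := by
      rcases eq_or_lt_of_le hη₀A.1 with hcase1 | hcase1
      · -- inner circle
        have habs : ‖η₀‖ = δ := hcase1.symm
        have h1 : u η₀ ≤ M := hM η₀ habs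
        have h2 : Complex.normSq η₀ = δ^2 := by
          rw [Complex.normSq_eq_norm_sq, habs]
        have h3 : Real.log (‖η₀‖) - Real.log δ = 0 := by rw [habs]; ring
        rw [hh]
        simp only
        rw [h2, h3]
        nlinarith [hγpos]
      rcases eq_or_lt_of_le hη₀A.2 with hcase2 | hcase2
      · -- outer circle
        have habs : ‖η₀‖ = R := hcase2
        have h1 : u η₀ ≤ C := hC η₀
        have h2 : Complex.normSq η₀ = R^2 := by rw [Complex.normSq_eq_norm_sq, habs]
        rw [hh]
        simp only
        rw [h2, habs]
        have hβval : β * (Real.log R - Real.log δ) = C - M + 1 := by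
          rw [hβ]; field_simp
        have hγval : γ * R^2 = 1 := by
          rw [hγ]; field_simp
        rw [hγval] at *
        nlinarith [hβval, hγpos, mul_nonneg (le_of_lt hγpos) (sq_nonneg δ)]
      · -- interior: impossible
        exfalso
        have hη₀0 : η₀ ≠ 0 := by
          intro h0
          rw [h0] at hcase1
          simp at hcase1
          linarith
        -- local max of h at η₀
        have hlocal : ∀ e : ℂ, IsLocalMax (fun s : ℝ => h (η₀ + s • e)) 0 := by
          intro e
          have hopen : IsOpen {ζ : ℂ | δ < ‖ζ‖ ∧ ‖ζ‖ < R} := by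
            apply IsOpen.inter
            · exact isOpen_lt continuous_const continuous_norm
            · exact isOpen_lt continuous_norm continuous_const
          have hmemo : η₀ ∈ {ζ : ℂ | δ < ‖ζ‖ ∧ ‖ζ‖ < R} := ⟨hcase1, hcase2⟩
          have hcont : Continuous (fun s : ℝ => η₀ + s • e) := by fun_prop
          have hpre : ∀ᶠ s in nhds (0:ℝ),
              (η₀ + s • e) ∈ {ζ : ℂ | δ < ‖ζ‖ ∧ ‖ζ‖ < R} := by
            apply hcont.continuousAt.preimage_mem_nhds
            apply hopen.mem_nhds
            simpa using hmemo
          filter_upwards [hpre] with s hs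
          have : (η₀ + s • e) ∈ A := ⟨le_of_lt hs.1, le_of_lt hs.2⟩
          have h1 := hη₀max this
          simpa using h1
        -- line data
        obtain ⟨g1, gI, L1, LI, hg1, hgI, hg1d, hgId, hsum⟩ := hlev η₀
        obtain ⟨q1, qI, P1, PI, hq1, hqI, hq1d, hqId, hPsum⟩ := logLine η₀ hη₀0
        -- assemble h-line derivative data, direction 1
        have hdir : ∀ (e : ℂ) (ge qe : ℝ → ℝ) (Le Pe : ℝ),
            (∀ᶠ s in nhds (0:ℝ), HasDerivAt (fun τ : ℝ => u (η₀ + τ • e)) (ge s) s) →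
            (∀ᶠ s in nhds (0:ℝ), HasDerivAt
              (fun τ : ℝ => Real.log (‖(η₀ + τ • e)‖)) (qe s) s) →
            HasDerivAt ge Le 0 → HasDerivAt qe Pe 0 →
            Le + γ * (2*Complex.normSq e) - β * Pe ≤ 0 := by
          intro e ge qe Le Pe hge hqe hged hqed
          have hline : ∀ᶠ s in nhds (0:ℝ), HasDerivAt (fun τ : ℝ => h (η₀ + τ • e))
              (ge s + γ * (2*(η₀ * (starRingEnd ℂ) e).re + 2*Complex.normSq e*s) - β * qe s) s := by
            filter_upwards [hge, hqe] with s hges hqes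
            have hn := normSqLine η₀ e s
            have := (hges.add ((hn.const_mul γ))).sub ((hqes.sub_const (Real.log δ)).const_mul β)
            exact this
          have hder2 : HasDerivAt (fun s : ℝ =>
              ge s + γ * (2*(η₀ * (starRingEnd ℂ) e).re + 2*Complex.normSq e*s) - β * qe s)
              (Le + γ * (2*Complex.normSq e) - β * Pe) 0 := by
            have hn2 : HasDerivAt (fun s : ℝ =>
                2*(η₀ * (starRingEnd ℂ) e).re + 2*Complex.normSq e*s) (2*Complex.normSq e) 0 := by
              simpa using ((hasDerivAt_id (0:ℝ)).const_mul (2*Complex.normSq e)).const_add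
                (2*(η₀ * (starRingEnd ℂ) e).re)
            exact (hged.add (hn2.const_mul γ)).sub (hqed.const_mul β)
          exact secondDerivTest hline hder2 (hlocal e)
        have hd1 := hdir 1 g1 q1 L1 P1 hg1 hq1 hg1d hq1d
        have hdI := hdir Complex.I gI qI LI PI hgI hqI hgId hqId
        rw [Complex.normSq_one] at hd1
        rw [Complex.normSq_I] at hdI
        -- sum: L1 + LI + 4γ - β*(P1+PI) ≤ 0, with L1+LI ≥ 0, P1+PI = 0
        nlinarith [hsum, hPsum, hγpos]
    -- conclude
    have hhx : h x ≤ M + γ * δ^2 := le_trans (hη₀max hxA) hbdry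
    rw [hh] at hhx
    simp only at hhx
    have hnsq : 0 ≤ Complex.normSq x := Complex.normSq_nonneg x
    have hβK : β * K = (C - M + 1) * K / (Real.log R - Real.log δ) := by
      rw [hβ]; ring
    have hγδ : γ * δ^2 = δ^2/R^2 := by rw [hγ]; ring
    nlinarith [hhx, mul_nonneg (le_of_lt hγpos) hnsq, hβK, hγδ]
  -- take R → ∞
  apply ge_of_tendsto (f := fun R : ℝ => M + δ^2/R^2 + (C - M + 1) * K / (Real.log R - Real.log δ))
    (x := Filter.atTop)
  · have t1 : Filter.Tendsto (fun R : ℝ => δ^2/R^2) Filter.atTop (nhds 0) := by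
      apply Filter.Tendsto.div_atTop tendsto_const_nhds
      exact (Filter.tendsto_pow_atTop (two_ne_zero)).comp Filter.tendsto_id
    have t2 : Filter.Tendsto (fun R : ℝ => (C - M + 1) * K / (Real.log R - Real.log δ))
        Filter.atTop (nhds 0) := by
      apply Filter.Tendsto.div_atTop tendsto_const_nhds
      apply Filter.tendsto_atTop_add_const_right
      exact Real.tendsto_log_atTop
    have := (tendsto_const_nhds (x := M) (f := Filter.atTop)).add t1 |>.add t2
    simpa using this
  · rw [Filter.eventually_atTop]
    exact ⟨max (δ+1) (‖x‖), fun R hR =>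
      hRbound R (le_trans (le_max_left _ _) hR) (le_trans (le_max_right _ _) hR)⟩

lemma main_contradiction
    {Ω : Set (ℂ × ℂ)} (hΩ : IsOpen Ω) {φ : ℂ × ℂ → ℝ} (hφ : ContDiffOn ℝ ∞ φ Ω)
    (hpsh : IsPSH Ω φ) {C : ℝ} (hbd : ∀ q ∈ Ω, φ q ≤ C)
    {f : ℂ → ℂ × ℂ} (hf : Differentiable ℂ f) (hfΩ : ∀ ζ, f ζ ∈ Ω)
    (hf1 : ∀ ζ : ℂ, (deriv f ζ).1 = 1)
    {ε : ℝ} (hε : 0 < ε) {U : Set (ℂ × ℂ)} (hUo : IsOpen U) (hpU : f 0 ∈ U) (hUΩ : U ⊆ Ω)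
    (hpshU : IsPSH U (fun z => φ z - ε * eSq z)) : False := by
  set u : ℂ → ℝ := fun ζ => φ (f ζ) with hudef
  set ψ : ℂ × ℂ → ℝ := fun z => φ z - ε * eSq z with hψdef
  have hψC : ContDiffOn ℝ ∞ ψ U :=
    (hφ.mono hUΩ).sub ((contDiff_const.mul eSq_contDiff).contDiffOn)
  have huc : Continuous u := by
    apply hφ.continuousOn.comp_continuous hf.continuous hfΩ
  have hubd : ∀ ζ, u ζ ≤ C := fun ζ => hbd _ (hfΩ ζ)
  -- global Levi bound for u
  have hlev : ∀ ζ : ℂ, LeviLine u ζ 0 := by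
    intro ζ
    obtain ⟨g1, hg1, hg1d⟩ := chainC hΩ hφ isOpen_univ hf.differentiableOn
      (mem_univ ζ) (hfΩ ζ) 1
    obtain ⟨gI, hgI, hgId⟩ := chainC hΩ hφ isOpen_univ hf.differentiableOn
      (mem_univ ζ) (hfΩ ζ) Complex.I
    refine ⟨g1, gI, _, _, hg1, hgI, hg1d, hgId, ?_⟩
    have hsum : (fderiv ℝ (fderiv ℝ φ) (f ζ) ((1:ℂ) • deriv f ζ) ((1:ℂ) • deriv f ζ)
          + fderiv ℝ φ (f ζ) (((1:ℂ)*(1:ℂ)) • deriv (deriv f) ζ))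
        + (fderiv ℝ (fderiv ℝ φ) (f ζ) (Complex.I • deriv f ζ) (Complex.I • deriv f ζ)
          + fderiv ℝ φ (f ζ) ((Complex.I*Complex.I) • deriv (deriv f) ζ))
        = fderiv ℝ (fderiv ℝ φ) (f ζ) (deriv f ζ) (deriv f ζ)
          + fderiv ℝ (fderiv ℝ φ) (f ζ) (Complex.I • deriv f ζ) (Complex.I • deriv f ζ) := by
      simp only [one_smul, one_mul, Complex.I_mul_I, neg_one_smul, map_neg]
      ring
    rw [hsum]
    exact levi_nonneg hΩ hφ hpsh (hfΩ ζ) (deriv f ζ)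
  -- the strict bound near 0
  set W : Set ℂ := f ⁻¹' U with hW
  have hWo : IsOpen W := hUo.preimage hf.continuous
  have h0W : (0:ℂ) ∈ W := hpU
  obtain ⟨δ', hδ', hδ'W⟩ := Metric.isOpen_iff.1 hWo 0 h0W
  set δ : ℝ := δ'/2 with hδdef
  have hδpos : 0 < δ := by positivity
  have hDW : ∀ ζ : ℂ, ‖ζ‖ ≤ δ → ζ ∈ W := by
    intro ζ hζ
    apply hδ'W
    rw [Metric.mem_ball, Complex.dist_eq, sub_zero]
    calc ‖ζ‖ ≤ δ := hζ
      _ < δ' := by rw [hδdef]; linarith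
  have hlevW : ∀ ζ : ℂ, ‖ζ‖ ≤ δ → LeviLine u ζ (4*ε) := by
    intro ζ hζδ
    have hζW : ζ ∈ W := hDW ζ hζδ
    have hfζU : f ζ ∈ U := hζW
    obtain ⟨p1, hp1, hp1d⟩ := chainC hUo hψC hWo (hf.differentiableOn.mono (subset_univ W))
      hζW hfζU 1
    obtain ⟨pI, hpI, hpId⟩ := chainC hUo hψC hWo (hf.differentiableOn.mono (subset_univ W))
      hζW hfζU Complex.I
    obtain ⟨q1, hq1, hq1d⟩ := chainC isOpen_univ eSq_contDiff.contDiffOn isOpen_univ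
      hf.differentiableOn (mem_univ ζ) (mem_univ _) 1
    obtain ⟨qI, hqI, hqId⟩ := chainC isOpen_univ eSq_contDiff.contDiffOn isOpen_univ
      hf.differentiableOn (mem_univ ζ) (mem_univ _) Complex.I
    have hcomb : ∀ e : ℂ, (fun τ : ℝ => ψ (f (ζ + τ • e)) + ε * eSq (f (ζ + τ • e)))
        = fun τ : ℝ => u (ζ + τ • e) := by
      intro e
      funext τ
      show (φ (f (ζ + τ • e)) - ε * eSq (f (ζ + τ • e))) + ε * eSq (f (ζ + τ • e))
        = φ (f (ζ + τ • e))
      ring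
    refine ⟨fun s => p1 s + ε * q1 s, fun s => pI s + ε * qI s, _, _, ?_, ?_,
      hp1d.add (hq1d.const_mul ε), hpId.add (hqId.const_mul ε), ?_⟩
    · filter_upwards [hp1, hq1] with s hs1 hs2
      have := hs1.add (hs2.const_mul ε)
      rw [← hcomb 1]
      exact this
    · filter_upwards [hpI, hqI] with s hs1 hs2
      have := hs1.add (hs2.const_mul ε)
      rw [← hcomb Complex.I]
      exact this
    · -- lower bound 4ε
      set v := deriv f ζ with hv
      set a := deriv (deriv f) ζ with ha
      have hψsum : (fderiv ℝ (fderiv ℝ ψ) (f ζ) ((1:ℂ) • v) ((1:ℂ) • v)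
            + fderiv ℝ ψ (f ζ) (((1:ℂ)*(1:ℂ)) • a))
          + (fderiv ℝ (fderiv ℝ ψ) (f ζ) (Complex.I • v) (Complex.I • v)
            + fderiv ℝ ψ (f ζ) ((Complex.I*Complex.I) • a))
          = fderiv ℝ (fderiv ℝ ψ) (f ζ) v v
            + fderiv ℝ (fderiv ℝ ψ) (f ζ) (Complex.I • v) (Complex.I • v) := by
        simp only [one_smul, one_mul, Complex.I_mul_I, neg_one_smul, map_neg]
        ring
      have hsqsum : (fderiv ℝ (fderiv ℝ eSq) (f ζ) ((1:ℂ) • v) ((1:ℂ) • v)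
            + fderiv ℝ eSq (f ζ) (((1:ℂ)*(1:ℂ)) • a))
          + (fderiv ℝ (fderiv ℝ eSq) (f ζ) (Complex.I • v) (Complex.I • v)
            + fderiv ℝ eSq (f ζ) ((Complex.I*Complex.I) • a))
          = fderiv ℝ (fderiv ℝ eSq) (f ζ) v v
            + fderiv ℝ (fderiv ℝ eSq) (f ζ) (Complex.I • v) (Complex.I • v) := by
        simp only [one_smul, one_mul, Complex.I_mul_I, neg_one_smul, map_neg]
        ring
      have hψpos : 0 ≤ fderiv ℝ (fderiv ℝ ψ) (f ζ) v v
          + fderiv ℝ (fderiv ℝ ψ) (f ζ) (Complex.I • v) (Complex.I • v) :=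
        levi_nonneg hUo hψC hpshU hfζU v
      have hsqval : fderiv ℝ (fderiv ℝ eSq) (f ζ) v v
          + fderiv ℝ (fderiv ℝ eSq) (f ζ) (Complex.I • v) (Complex.I • v)
          = 4 * (‖v.1‖ ^2 + ‖v.2‖ ^2) := eSq_levi (f ζ) v
      have hv1 : ‖v.1‖ = 1 := by rw [hv, hf1 ζ]; exact norm_one
      have h4 : (4:ℝ) ≤ 4 * (‖v.1‖ ^2 + ‖v.2‖ ^2) := by
        rw [hv1]
        nlinarith [sq_nonneg (‖v.2‖)]
      nlinarith [hψpos, hsqval, h4, hε]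
  -- max over the closed disc
  set D : Set ℂ := Metric.closedBall (0:ℂ) δ with hD
  have hDc : IsCompact D := isCompact_closedBall _ _
  obtain ⟨ζs, hζsD, hζsmax⟩ := hDc.exists_isMaxOn ⟨0, Metric.mem_closedBall_self (le_of_lt hδpos)⟩
    huc.continuousOn
  have hζsδ : ‖ζs‖ ≤ δ := by
    have := hζsD
    rwa [hD, Metric.mem_closedBall, Complex.dist_eq, sub_zero] at this
  -- global max
  have hglobal : ∀ x : ℂ, u x ≤ u ζs := by
    intro x
    rcases le_or_gt (‖x‖) δ with hcase | hcase
    · exact hζsmax (by rw [hD, Metric.mem_closedBall, Complex.dist_eq, sub_zero]; exact hcase)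
    · have hM : ∀ ζ : ℂ, ‖ζ‖ = δ → u ζ ≤ u ζs := by
        intro ζ hζ
        exact hζsmax (by rw [hD, Metric.mem_closedBall, Complex.dist_eq, sub_zero, hζ])
      exact globalMaxBound huc hubd hlev hδpos hM (hubd ζs) x hcase
  -- contradiction with strict Levi bound at ζs
  obtain ⟨g1, gI, L1, LI, hg1, hgI, hg1d, hgId, hge⟩ := hlevW ζs hζsδ
  have hloc : ∀ e : ℂ, IsLocalMax (fun s : ℝ => u (ζs + s • e)) 0 := by
    intro e
    apply Filter.Eventually.of_forall
    intro s
    show u (ζs + s • e) ≤ u (ζs + (0:ℝ) • e)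
    have h0 : ζs + (0:ℝ) • e = ζs := by simp
    rw [h0]
    exact hglobal _
  have h1 := secondDerivTest hg1 hg1d (hloc 1)
  have hI := secondDerivTest hgI hgId (hloc Complex.I)
  nlinarith [hge, h1, hI, hε]

end Aux

/-- if `∂𝔄` is foliated by translates of an entire graph, then the
translated graphs above the boundary lie in `𝔄`; hence `𝔄` is not Brody hyperbolic
and the core of `𝔄` is nonempty. -/
theorem statement14 (F : ℂ × ℝ → ℝ) (hF : Continuous F)
    (H : ℂ → ℂ) (Θ : ℝ → ℝ) (hH : Differentiable ℂ H) (hΘ : Continuous Θ)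
    (hb : frontier (modelDomain F) = foliation H Θ) :
    (∀ t s : ℝ, Θ t < s → ∀ z : ℂ,
      ((z, H z + (t : ℂ) + (s : ℂ) * Complex.I) : ℂ × ℂ) ∈ modelDomain F) ∧
    ¬ BrodyHyperbolic (modelDomain F) ∧ (core (modelDomain F)).Nonempty := by
  have hΩ : IsOpen (modelDomain F) := isOpen_modelDomain F hF
  have hmem := graph_above_mem F hF H Θ hb
  have hs0 : Θ 0 < Θ 0 + 1 := by linarith
  set f : ℂ → ℂ × ℂ :=
    fun z => (z, H z + ((0:ℝ):ℂ) + ((Θ 0 + 1 : ℝ):ℂ) * Complex.I) with hfdef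
  have hfd : Differentiable ℂ f :=
    differentiable_id.prodMk ((hH.add_const _).add_const _)
  have hfm : ∀ z, f z ∈ modelDomain F := fun z => hmem 0 (Θ 0 + 1) hs0 z
  have hf1 : ∀ ζ : ℂ, (deriv f ζ).1 = 1 := by
    intro ζ
    have hH' : HasDerivAt (fun z : ℂ => H z + ((0:ℝ):ℂ) + ((Θ 0 + 1 : ℝ):ℂ) * Complex.I)
        (deriv H ζ) ζ := ((hH.differentiableAt.hasDerivAt).add_const _).add_const _
    have hder : HasDerivAt f (1, deriv H ζ) ζ := (hasDerivAt_id ζ).prodMk hH'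
    rw [hder.deriv]
  refine ⟨hmem, ?_, ?_⟩
  · intro hB
    have := hB f hfd hfm 0 1
    have h01 : (0:ℂ) = 1 := congrArg Prod.fst this
    exact zero_ne_one h01
  · refine ⟨f 0, hfm 0, ?_⟩
    intro φ hφsm hpsh hbdd hstrict
    obtain ⟨C, hC⟩ := hbdd
    obtain ⟨ε, hε, U, hUo, hpU, hUΩ, hpshU⟩ := hstrict
    exact main_contradiction hΩ (hφsm.of_le (by simp)) hpsh hC hfd hfm hf1 hε hUo hpU hUΩ hpshU
end
end

section
/- Let f : ℂ × 𝔻 → ℂ be a holomorphic function on the cylinder ℂ × 𝔻 ⊆ ℂ², where 𝔻 = {w ∈ ℂ : |w| < 1}, such that ∫_{ℂ×𝔻} |f|² dλ < ∞, where λ is the Lebesgue measure on ℂ² ≅ ℝ⁴. Then f vanishes identically; that is, the space of square-integrable holomorphic functions on ℂ × 𝔻 consists of just the zero function. -/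
open Complex Set MeasureTheory
open scoped ENNReal NNReal Topology

noncomputable section

section AuxStatement18
open Metric
open scoped Real

/-- Circle mean value property for entire functions. -/
lemma circleMV (g : ℂ → ℂ) (hg : Differentiable ℂ g) (c : ℂ) {r : ℝ} (hr : 0 < r) :
    ∫ θ in (0:ℝ)..(2*π), g (circleMap c r θ) = (2*π : ℝ) • g c := by
  have h := (hg.diffContOnCl (s := ball c r)).circleIntegral_sub_inv_smul (w := c)
    (mem_ball_self hr)
  rw [circleIntegral] at h
  have key : ∀ θ : ℝ, deriv (circleMap c r) θ • (circleMap c r θ - c)⁻¹ • g (circleMap c r θ)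
      = I • g (circleMap c r θ) := by
    intro θ
    rw [deriv_circleMap, circleMap_sub_center, smul_smul]
    congr 1
    have hne : circleMap 0 r θ ≠ 0 := by
      simpa using circleMap_ne_center (c := (0:ℂ)) (R := r) hr.ne' (θ := θ)
    rw [mul_comm (circleMap 0 r θ) I, mul_assoc, mul_inv_cancel₀ hne, mul_one]
  simp_rw [key] at h
  rw [intervalIntegral.integral_smul] at h
  have : (2 * ↑π * I : ℂ) • g c = I • ((2*π:ℝ) • g c) := by
    simp [smul_smul, Complex.real_smul]; ring
  rw [this] at h
  exact smul_right_injective ℂ I_ne_zero h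

lemma circleNormBound (g : ℂ → ℂ) (hg : Differentiable ℂ g) (c : ℂ) {r : ℝ} (hr : 0 < r) :
    2 * π * ‖g c‖ ≤ ∫ θ in (0:ℝ)..(2*π), ‖g (circleMap c r θ)‖ := by
  have h := circleMV g hg c hr
  calc 2 * π * ‖g c‖ = ‖(2*π:ℝ) • g c‖ := by
        rw [norm_smul, Real.norm_eq_abs, abs_of_pos Real.two_pi_pos]
    _ = ‖∫ θ in (0:ℝ)..(2*π), g (circleMap c r θ)‖ := by rw [h]
    _ ≤ _ := intervalIntegral.norm_integral_le_integral_norm Real.two_pi_pos.le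

lemma contPolar (g : ℂ → ℂ) (hg : Continuous g) (c : ℂ) :
    Continuous (fun p : ℝ × ℝ => p.1 * ‖g (c + Complex.polarCoord.symm p)‖) := by
  have h : Continuous (fun p : ℝ × ℝ => Complex.polarCoord.symm p) := by
    have : (fun p : ℝ × ℝ => Complex.polarCoord.symm p)
        = fun p : ℝ × ℝ => (p.1 : ℂ) * (Real.cos p.2 + Real.sin p.2 * Complex.I) := by
      funext p; simp [Complex.polarCoord_symm_apply]
    rw [this]; fun_prop
  fun_prop

lemma areaBound (g : ℂ → ℂ) (hg : Differentiable ℂ g) (c : ℂ) {A : ℝ} (hA : 0 < A) :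
    π * A^2 * ‖g c‖ ≤ ∫ z in ball c A, ‖g z‖ := by
  -- translate to a ball centred at the origin
  have hstep1 : ∫ z in ball c A, ‖g z‖ = ∫ z in ball (0:ℂ) A, ‖g (c + z)‖ := by
    rw [← integral_indicator measurableSet_ball, ← integral_indicator measurableSet_ball,
      ← integral_add_left_eq_self (μ := (volume : Measure ℂ))
        (f := fun z => (ball c A).indicator (fun z => ‖g z‖) z) c]
    congr 1; funext z
    by_cases hz : z ∈ ball (0:ℂ) A
    · have hz' : c + z ∈ ball c A := by
        rw [mem_ball_zero_iff] at hz
        simpa [mem_ball, dist_eq_norm] using hz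
      simp [indicator_of_mem hz, indicator_of_mem hz']
    · have hz' : c + z ∉ ball c A := by
        rw [mem_ball_zero_iff] at hz
        simpa [mem_ball, dist_eq_norm] using hz
      simp [indicator_of_notMem hz, indicator_of_notMem hz']
  set F : ℂ → ℝ := fun z => (ball (0:ℂ) A).indicator (fun z => ‖g (c + z)‖) z with hF
  set Φ : ℝ × ℝ → ℝ := fun p => p.1 * ‖g (c + Complex.polarCoord.symm p)‖ with hΦ
  have hpolar := Complex.integral_comp_polarCoord_symm F
  have hcm : ∀ r θ : ℝ, c + Complex.polarCoord.symm (r, θ) = circleMap c r θ := by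
    intro r θ
    rw [Complex.polarCoord_symm_apply, circleMap, Complex.exp_mul_I]
    push_cast
    ring
  have htarget : (∫ p in polarCoord.target, p.1 • F (Complex.polarCoord.symm p))
      = ∫ p in Ioo (0:ℝ) A ×ˢ Ioo (-π) π, Φ p := by
    rw [← integral_indicator polarCoord.open_target.measurableSet,
      ← integral_indicator (measurableSet_Ioo.prod measurableSet_Ioo)]
    congr 1; funext p
    by_cases h1 : p ∈ polarCoord.target
    · have h1' : p ∈ Ioi (0:ℝ) ×ˢ Ioo (-π) π := h1
      have hp1 : 0 < p.1 := h1'.1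
      have habs : ‖Complex.polarCoord.symm p‖ = p.1 := by
        rw [Complex.norm_polarCoord_symm, abs_of_pos hp1]
      by_cases h3 : p.1 < A
      · have hmem : Complex.polarCoord.symm p ∈ ball (0:ℂ) A := by
          rw [mem_ball_zero_iff, habs]; exact h3
        have h4 : p ∈ Ioo (0:ℝ) A ×ˢ Ioo (-π) π := ⟨⟨hp1, h3⟩, h1'.2⟩
        rw [indicator_of_mem h1, indicator_of_mem h4, hF]
        simp only [indicator_of_mem hmem]
        rw [smul_eq_mul]
      · have hmem : Complex.polarCoord.symm p ∉ ball (0:ℂ) A := by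
          rw [mem_ball_zero_iff, habs]; exact h3
        have h4 : p ∉ Ioo (0:ℝ) A ×ˢ Ioo (-π) π := fun hp => h3 hp.1.2
        rw [indicator_of_mem h1, indicator_of_notMem h4, hF]
        simp only [indicator_of_notMem hmem, smul_zero]
    · have h2 : p ∉ Ioo (0:ℝ) A ×ˢ Ioo (-π) π := by
        intro hp
        exact h1 ⟨mem_Ioi.2 hp.1.1, hp.2⟩
      simp only [indicator_of_notMem h1, indicator_of_notMem h2]
  have hΦc : Continuous Φ := contPolar g hg.continuous c
  have hΦint : IntegrableOn Φ (Ioo (0:ℝ) A ×ˢ Ioo (-π) π) := by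
    apply (hΦc.continuousOn.integrableOn_compact ((isCompact_Icc (a := (0:ℝ)) (b := A)).prod
      (isCompact_Icc (a := -π) (b := π)))).mono_set
    exact prod_mono Ioo_subset_Icc_self Ioo_subset_Icc_self
  have hΦint' : Integrable Φ ((volume.restrict (Ioo (0:ℝ) A)).prod
      (volume.restrict (Ioo (-π) π))) := by
    rwa [Measure.prod_restrict, ← Measure.volume_eq_prod]
  have hfub : (∫ p in Ioo (0:ℝ) A ×ˢ Ioo (-π) π, Φ p)
      = ∫ r in Ioo (0:ℝ) A, ∫ θ in Ioo (-π) π, Φ (r, θ) := by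
    rw [Measure.volume_eq_prod]
    exact setIntegral_prod Φ (by rwa [← Measure.volume_eq_prod])
  -- the inner integral over the angle
  have hinner : ∀ r : ℝ, r ∈ Ioo (0:ℝ) A →
      2 * π * ‖g c‖ * r ≤ ∫ θ in Ioo (-π) π, Φ (r, θ) := by
    intro r hr
    have hΦr : ∀ θ : ℝ, Φ (r, θ) = r * ‖g (circleMap c r θ)‖ := by
      intro θ; rw [hΦ]; simp only; rw [hcm]
    have hper : Function.Periodic (fun θ : ℝ => ‖g (circleMap c r θ)‖) (2 * π) :=
      fun θ => congrArg (fun z => ‖g z‖) (periodic_circleMap c r θ)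
    have hkey : (∫ θ in Ioo (-π) π, ‖g (circleMap c r θ)‖)
        = ∫ θ in (0:ℝ)..(2*π), ‖g (circleMap c r θ)‖ := by
      have := hper.intervalIntegral_add_eq (-π) 0
      rw [zero_add, show -π + 2*π = π by ring] at this
      rw [← MeasureTheory.integral_Ioc_eq_integral_Ioo,
        ← intervalIntegral.integral_of_le (by linarith [Real.pi_pos] : -π ≤ π)]
      exact this
    calc 2 * π * ‖g c‖ * r ≤ (∫ θ in (0:ℝ)..(2*π), ‖g (circleMap c r θ)‖) * r := by
          apply mul_le_mul_of_nonneg_right (circleNormBound g hg c hr.1) hr.1.le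
      _ = ∫ θ in Ioo (-π) π, Φ (r, θ) := by
          simp_rw [hΦr]
          rw [MeasureTheory.integral_const_mul, ← hkey, mul_comm]
  -- integrate the lower bound over the radius
  have houter : IntegrableOn (fun r => ∫ θ in Ioo (-π) π, Φ (r, θ)) (Ioo (0:ℝ) A) :=
    hΦint'.integral_prod_left
  have hmono : (∫ r in Ioo (0:ℝ) A, 2 * π * ‖g c‖ * r)
      ≤ ∫ r in Ioo (0:ℝ) A, ∫ θ in Ioo (-π) π, Φ (r, θ) := by
    apply setIntegral_mono_on _ houter measurableSet_Ioo hinner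
    exact ((continuous_const.mul continuous_id).continuousOn.integrableOn_compact
      (isCompact_Icc (a := (0:ℝ)) (b := A))).mono_set Ioo_subset_Icc_self
  have hval : (∫ r in Ioo (0:ℝ) A, 2 * π * ‖g c‖ * r) = π * A^2 * ‖g c‖ := by
    rw [MeasureTheory.integral_const_mul, ← MeasureTheory.integral_Ioc_eq_integral_Ioo,
      ← intervalIntegral.integral_of_le hA.le, integral_id]
    ring
  rw [hstep1, ← integral_indicator measurableSet_ball]
  calc π * A^2 * ‖g c‖ = ∫ r in Ioo (0:ℝ) A, 2 * π * ‖g c‖ * r := hval.symm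
    _ ≤ ∫ r in Ioo (0:ℝ) A, ∫ θ in Ioo (-π) π, Φ (r, θ) := hmono
    _ = ∫ p in Ioo (0:ℝ) A ×ˢ Ioo (-π) π, Φ p := hfub.symm
    _ = ∫ p in polarCoord.target, p.1 • F (Complex.polarCoord.symm p) := htarget.symm
    _ = ∫ p : ℂ, F p := hpolar

lemma entireL2zero (g : ℂ → ℂ) (hg : Differentiable ℂ g)
    (h2 : (∫⁻ z, ((‖g z‖₊ : ℝ≥0∞) ^ 2)) < ⊤) : ∀ c, g c = 0 := by
  intro c
  set M : ℝ := (∫⁻ z, ((‖g z‖₊ : ℝ≥0∞) ^ 2)).toReal with hMdef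
  have hM0 : 0 ≤ M := ENNReal.toReal_nonneg
  have hsq : ∀ A : ℝ, 0 < A → (∫ z in ball c A, ‖g z‖^2) ≤ M := by
    intro A hA
    have hint : IntegrableOn (fun z => ‖g z‖^2) (ball c A) := by
      exact (((hg.continuous.norm.pow 2).continuousOn).integrableOn_compact
        (isCompact_closedBall c A)).mono_set ball_subset_closedBall
    have heq : (∫ z in ball c A, ‖g z‖^2)
        = (∫⁻ z in ball c A, ((‖g z‖₊ : ℝ≥0∞) ^ 2)).toReal := by
      rw [integral_eq_lintegral_of_nonneg_ae (Filter.Eventually.of_forall fun z => by positivity)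
        hint.aestronglyMeasurable]
      congr 1
      apply lintegral_congr fun z => ?_
      rw [ENNReal.ofReal_pow (norm_nonneg _)]; exact congrArg (· ^ 2) (ofReal_norm _)
    rw [heq, hMdef]
    exact ENNReal.toReal_mono h2.ne (setLIntegral_le_lintegral _ _)
  have hvol : ∀ A : ℝ, 0 < A → (volume (ball c A)).toReal = π * A^2 := by
    intro A hA
    rw [Complex.volume_ball]
    rw [ENNReal.toReal_mul, ENNReal.toReal_pow, ENNReal.toReal_ofReal hA.le,
      ENNReal.coe_toReal, NNReal.coe_real_pi]
    ring
  have key : ∀ l : ℝ, 0 < l → ∀ A : ℝ, 0 < A →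
      l * (π * A^2 * ‖g c‖) ≤ (π * A^2 + l^2 * M) / 2 := by
    intro l hl A hA
    have h1 : l * (π * A^2 * ‖g c‖) ≤ l * ∫ z in ball c A, ‖g z‖ :=
      mul_le_mul_of_nonneg_left (areaBound g hg c hA) hl.le
    have h2' : (∫ z in ball c A, l * ‖g z‖)
        ≤ ∫ z in ball c A, (1 + l^2 * ‖g z‖^2) / 2 := by
      apply setIntegral_mono_on
      · exact ((continuous_const.mul hg.continuous.norm).continuousOn.integrableOn_compact
          (isCompact_closedBall c A)).mono_set ball_subset_closedBall
      · exact ((((continuous_const.add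
          (continuous_const.mul (hg.continuous.norm.pow 2))).div_const 2)).continuousOn.integrableOn_compact
          (isCompact_closedBall c A)).mono_set ball_subset_closedBall
      · exact measurableSet_ball
      · intro z _; nlinarith [sq_nonneg (1 - l * ‖g z‖), sq_nonneg (l * ‖g z‖)]
    have h3 : (∫ z in ball c A, (1 + l^2 * ‖g z‖^2) / 2)
        ≤ (π * A^2 + l^2 * M) / 2 := by
      have hi1 : IntegrableOn (fun _ : ℂ => (1:ℝ)) (ball c A) :=
        integrableOn_const measure_ball_lt_top.ne
      have hi2 : IntegrableOn (fun z => l^2 * ‖g z‖^2) (ball c A) :=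
        ((continuous_const.mul (hg.continuous.norm.pow 2)).continuousOn.integrableOn_compact
          (isCompact_closedBall c A)).mono_set ball_subset_closedBall
      have : (∫ z in ball c A, (1 + l^2 * ‖g z‖^2) / 2)
          = ((∫ z in ball c A, (1:ℝ)) + l^2 * ∫ z in ball c A, ‖g z‖^2) / 2 := by
        rw [← MeasureTheory.integral_const_mul, ← integral_add hi1 hi2]
        simp_rw [integral_div]
      rw [this]
      have hone : (∫ z in ball c A, (1:ℝ)) = π * A^2 := by
        rw [setIntegral_const, smul_eq_mul, mul_one, measureReal_def, hvol A hA]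
      rw [hone]
      have := hsq A hA
      nlinarith [sq_nonneg l]
    calc l * (π * A^2 * ‖g c‖) ≤ l * ∫ z in ball c A, ‖g z‖ := h1
      _ = ∫ z in ball c A, l * ‖g z‖ := (MeasureTheory.integral_const_mul l _).symm
      _ ≤ _ := le_trans h2' h3
  -- deduce `l * ‖g c‖ ≤ 1 / 2` for every positive `l`
  have half : ∀ l : ℝ, 0 < l → l * ‖g c‖ ≤ 1 / 2 := by
    intro l hl
    have hbound : ∀ A : ℝ, 1 ≤ A → l * ‖g c‖ ≤ 1 / 2 + l^2 * M / (2 * π * A^2) := by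
      intro A hA1
      have hA : 0 < A := lt_of_lt_of_le one_pos hA1
      have hk := key l hl A hA
      have hπA : 0 < π * A^2 := by positivity
      rw [← sub_nonneg]
      have expand : 1/2 + l^2 * M / (2 * π * A^2) - l * ‖g c‖
          = ((π * A^2 + l^2 * M) / 2 - l * (π * A^2 * ‖g c‖)) / (π * A^2) := by
        field_simp
      rw [expand]
      exact div_nonneg (by linarith) hπA.le
    have htend : Filter.Tendsto (fun A : ℝ => 1 / 2 + l^2 * M / (2 * π * A^2))
        Filter.atTop (𝓝 (1 / 2)) := by
      have h1 : Filter.Tendsto (fun A : ℝ => l^2 * M / (2 * π * A^2))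
          Filter.atTop (𝓝 0) := by
        apply Filter.Tendsto.div_atTop tendsto_const_nhds
        apply Filter.Tendsto.const_mul_atTop (by positivity : (0:ℝ) < 2 * π)
        exact Filter.tendsto_pow_atTop two_ne_zero
      have := Filter.Tendsto.add (tendsto_const_nhds (x := (1/2 : ℝ))
        (f := Filter.atTop (α := ℝ))) h1
      simpa using this
    exact ge_of_tendsto htend (Filter.eventually_atTop.2 ⟨1, hbound⟩)
  by_contra hne
  have hpos : 0 < ‖g c‖ := norm_pos_iff.2 hne
  have := half (‖g c‖)⁻¹ (inv_pos.2 hpos)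
  rw [inv_mul_cancel₀ hpos.ne'] at this
  linarith

end AuxStatement18

/-- every square-integrable holomorphic function on the cylinder
`ℂ × 𝔻 ⊆ ℂ²` vanishes identically. -/
theorem statement18 (f : ℂ × ℂ → ℂ)
    (hf : DifferentiableOn ℂ f ((univ : Set ℂ) ×ˢ Metric.ball (0:ℂ) 1))
    (hL2 : (∫⁻ p in ((univ : Set ℂ) ×ˢ Metric.ball (0:ℂ) 1),
      ((‖f p‖₊ : ℝ≥0∞) ^ 2)) < ⊤) :
    ∀ p ∈ ((univ : Set ℂ) ×ˢ Metric.ball (0:ℂ) 1), f p = 0 := by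
  classical
  set S : Set (ℂ × ℂ) := (univ : Set ℂ) ×ˢ Metric.ball (0:ℂ) 1 with hSdef
  have hSopen : IsOpen S := isOpen_univ.prod Metric.isOpen_ball
  have hfc : ContinuousOn f S := hf.continuousOn
  -- a measurable version of `‖f ·‖₊ ^ 2`
  set F₀ : ℂ × ℂ → ℝ≥0∞ := S.piecewise (fun p => ((‖f p‖₊ : ℝ≥0∞) ^ 2)) 0 with hF₀def
  have houter : Continuous (fun x : ℂ => ((‖x‖₊ : ℝ≥0∞) ^ 2)) :=
    (ENNReal.continuous_pow 2).comp (ENNReal.continuous_coe.comp continuous_nnnorm)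
  have hF₀meas : Measurable F₀ := by
    apply ContinuousOn.measurable_piecewise
    · exact houter.comp_continuousOn hfc
    · exact continuousOn_const
    · exact hSopen.measurableSet
  have hF₀S : ∀ p ∈ S, F₀ p = ((‖f p‖₊ : ℝ≥0∞) ^ 2) := fun p hp => Set.piecewise_eq_of_mem _ _ _ hp
  have hrestrict : (volume : Measure (ℂ × ℂ)).restrict S
      = ((volume : Measure ℂ).prod ((volume : Measure ℂ).restrict (Metric.ball (0:ℂ) 1))) := by
    rw [hSdef, Measure.volume_eq_prod, ← Measure.prod_restrict, Measure.restrict_univ]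
  have hfin : (∫⁻ w in Metric.ball (0:ℂ) 1, ∫⁻ z, F₀ (z, w)) < ⊤ := by
    have h1 : (∫⁻ p in S, F₀ p) < ⊤ := by
      refine lt_of_le_of_lt (le_of_eq ?_) hL2
      exact setLIntegral_congr_fun_ae hSopen.measurableSet
        (Filter.Eventually.of_forall fun p hp => hF₀S p hp)
    rw [← Measure.restrict_restrict_of_subset (Subset.refl _)] at h1
    calc (∫⁻ w in Metric.ball (0:ℂ) 1, ∫⁻ z, F₀ (z, w))
        = ∫⁻ p, F₀ p ∂((volume : Measure ℂ).prod
            ((volume : Measure ℂ).restrict (Metric.ball (0:ℂ) 1))) :=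
          (MeasureTheory.lintegral_prod_symm F₀ hF₀meas.aemeasurable).symm
      _ = ∫⁻ p in S, F₀ p := by rw [hrestrict]
      _ < ⊤ := by
          refine lt_of_le_of_lt (le_of_eq ?_) hL2
          exact setLIntegral_congr_fun_ae hSopen.measurableSet
            (Filter.Eventually.of_forall fun p hp => hF₀S p hp)
  have hae : ∀ᵐ w ∂((volume : Measure ℂ).restrict (Metric.ball (0:ℂ) 1)),
      (∫⁻ z, F₀ (z, w)) < ⊤ :=
    ae_lt_top (hF₀meas.lintegral_prod_left') hfin.ne
  -- the set of good fibres
  set Z : Set ℂ := {w : ℂ | w ∈ Metric.ball (0:ℂ) 1 ∧ ∀ z, f (z, w) = 0} with hZdef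
  have hZae : ∀ᵐ w ∂((volume : Measure ℂ).restrict (Metric.ball (0:ℂ) 1)), w ∈ Z := by
    filter_upwards [hae, ae_restrict_mem measurableSet_ball] with w hw hwball
    refine ⟨hwball, ?_⟩
    have hgd : Differentiable ℂ (fun z => f (z, w)) := by
      intro z'
      have hp : (z', w) ∈ S := ⟨trivial, hwball⟩
      exact (hf.differentiableAt (hSopen.mem_nhds hp)).comp z'
        (differentiable_id.prodMk (differentiable_const w) z')
    have hw' : (∫⁻ z, ((‖f (z, w)‖₊ : ℝ≥0∞) ^ 2)) < ⊤ := by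
      refine lt_of_le_of_lt (le_of_eq ?_) hw
      exact lintegral_congr fun z => (hF₀S (z, w) ⟨trivial, hwball⟩).symm
    exact entireL2zero _ hgd hw'
  intro p hp
  -- `p.2` is in the closure of `Z`
  have hcl : p.2 ∈ closure Z := by
    rw [mem_closure_iff]
    intro U hU hUp
    by_contra hem
    have hsub : U ∩ Metric.ball (0:ℂ) 1 ⊆ {w | w ∉ Z} := by
      intro w hw hwZ
      exact hem ⟨w, hw.1, hwZ⟩
    have h0 : (volume : Measure ℂ).restrict (Metric.ball (0:ℂ) 1)
        (U ∩ Metric.ball (0:ℂ) 1) = 0 :=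
      measure_mono_null hsub hZae
    rw [Measure.restrict_apply₀ (hU.inter Metric.isOpen_ball).measurableSet.nullMeasurableSet,
      inter_assoc, inter_self] at h0
    have hpos : 0 < (volume : Measure ℂ) (U ∩ Metric.ball (0:ℂ) 1) :=
      (hU.inter Metric.isOpen_ball).measure_pos volume ⟨p.2, hUp, hp.2⟩
    exact hpos.ne' h0
  have hct : ContinuousAt (fun w => f (p.1, w)) p.2 := by
    have h1 : ContinuousAt f (p.1, p.2) :=
      (hf.differentiableAt (hSopen.mem_nhds (by simpa using hp))).continuousAt
    exact h1.comp ((continuous_const.prodMk continuous_id).continuousAt)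
  have hne : (𝓝[Z] p.2).NeBot := mem_closure_iff_nhdsWithin_neBot.1 hcl
  have h1 : Filter.Tendsto (fun w => f (p.1, w)) (𝓝[Z] p.2) (𝓝 (f (p.1, p.2))) :=
    hct.tendsto.mono_left nhdsWithin_le_nhds
  have h2 : Filter.Tendsto (fun w => f (p.1, w)) (𝓝[Z] p.2) (𝓝 0) := by
    apply Filter.Tendsto.congr' _ tendsto_const_nhds
    filter_upwards [self_mem_nhdsWithin] with w hw
    exact (hw.2 p.1).symm
  have hzero : f (p.1, p.2) = 0 := tendsto_nhds_unique h1 h2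
  simpa using hzero
end
end
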